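/- arXiv:math/9810185 — 2 statements merged into one kernel-verified Lean document; each statement's English description precedes it below -/
import Mathlib

section
/- Let Γ be a LOT of diameter at most 3 that contains a proper admissible subtree with more than one vertex. Then there exist a proper admissible subtree Γ' of Γ with more than one vertex and a vertex x ∈ V(Γ) \ V(Γ') such that Γ is spanned by V(Γ') ∪ {x}. -/
/-- A labelled oriented tree (LOT): edges `E` with initial, terminal and label
maps into the vertex set `V` (tree condition imposed separately). -/
structure LOT (V E : Type) where
  ι : E → V
  τ : E → V
  lab : E → V

namespace LOT

variable {V E : Type}

/-- The underlying (undirected simple) graph of a LOT. -/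
def graph (Γ : LOT V E) : SimpleGraph V :=
  SimpleGraph.fromRel (fun x y => ∃ e, Γ.ι e = x ∧ Γ.τ e = y)

/-- `Γ` is a (finite) tree: the underlying graph is a tree, there are no loops,
and the number of edges is one less than the number of vertices
(so distinct edges of `E` give distinct edges of the tree). -/
def IsTreeLOT [Fintype V] [Fintype E] (Γ : LOT V E) : Prop :=
  Γ.graph.IsTree ∧ Fintype.card E + 1 = Fintype.card V ∧ ∀ e, Γ.ι e ≠ Γ.τ e

/-- The degree of a vertex: the number of edges incident to it. -/
def degree [Fintype E] [DecidableEq V] (Γ : LOT V E) (v : V) : ℕ :=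
  (Finset.univ.filter (fun e => Γ.ι e = v ∨ Γ.τ e = v)).card

/-- A vertex is extremal if it has degree 1. -/
def Extremal [Fintype E] [DecidableEq V] (Γ : LOT V E) (v : V) : Prop :=
  Γ.degree v = 1

/-- The number of edges having `v` as their label. -/
def labelCount [Fintype E] [DecidableEq V] (Γ : LOT V E) (v : V) : ℕ :=
  (Finset.univ.filter (fun e => Γ.lab e = v)).card

/-- A subgraph `(S, F)` is admissible if the endpoints and the label of every
edge of `F` lie in `S`. -/
def Admissible (Γ : LOT V E) (S : Set V) (F : Set E) : Prop :=
  ∀ e ∈ F, Γ.ι e ∈ S ∧ Γ.τ e ∈ S ∧ Γ.lab e ∈ S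

/-- The subgraph `(S, F)` is connected (any two vertices of `S` are joined by a
path using edges of `F`). -/
def ConnectedOn (Γ : LOT V E) (S : Set V) (F : Set E) : Prop :=
  ∀ x ∈ S, ∀ y ∈ S,
    Relation.ReflTransGen
      (fun p q => ∃ e ∈ F, (Γ.ι e = p ∧ Γ.τ e = q) ∨ (Γ.ι e = q ∧ Γ.τ e = p)) x y

/-- `Γ` is minimal: every connected admissible subgraph is a single vertex. -/
def Minimal (Γ : LOT V E) : Prop :=
  ∀ (S : Set V) (F : Set E), Γ.Admissible S F → Γ.ConnectedOn S F → S.Subsingleton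

/-- The vertices in the span of a set `A` of vertices: the smallest subgraph
containing `A` and closed under adding any edge whose label and at least one
endpoint already lie in it. -/
inductive Spanned (Γ : LOT V E) (A : Set V) : V → Prop
  | base {x : V} : x ∈ A → Spanned Γ A x
  | extendτ {e : E} : Spanned Γ A (Γ.lab e) → Spanned Γ A (Γ.ι e) → Spanned Γ A (Γ.τ e)
  | extendι {e : E} : Spanned Γ A (Γ.lab e) → Spanned Γ A (Γ.τ e) → Spanned Γ A (Γ.ι e)

/-- `A` spans `Γ` if the span of `A` is all of `Γ`. -/
def Spans (Γ : LOT V E) (A : Set V) : Prop := ∀ x, Γ.Spanned A x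

/-- The diameter of (the underlying graph of) `Γ` is `n`. -/
def diamIs [Fintype V] (Γ : LOT V E) (n : ℕ) : Prop :=
  (∃ x y : V, Γ.graph.dist x y = n) ∧ ∀ x y : V, Γ.graph.dist x y ≤ n

/-- The diameter of `Γ` is at most `n`. -/
def diamLe [Fintype V] (Γ : LOT V E) (n : ℕ) : Prop :=
  ∀ x y : V, Γ.graph.dist x y ≤ n

/-- The initial graph `I(Γ)`, as an undirected graph: edge `e` joins `ι e` to `lab e`. -/
def Igraph (Γ : LOT V E) : SimpleGraph V :=
  SimpleGraph.fromRel (fun x y => ∃ e, Γ.ι e = x ∧ Γ.lab e = y)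

/-- The terminal graph `T(Γ)`, as an undirected graph: edge `e` joins `lab e` to `τ e`. -/
def Tgraph (Γ : LOT V E) : SimpleGraph V :=
  SimpleGraph.fromRel (fun x y => ∃ e, Γ.lab e = x ∧ Γ.τ e = y)

/-- The Wirtinger relators `ι(e) λ(e) τ(e)⁻¹ λ(e)⁻¹` of the LOT presentation. -/
def rels (Γ : LOT V E) : Set (FreeGroup V) :=
  {r | ∃ e, r = FreeGroup.of (Γ.ι e) * FreeGroup.of (Γ.lab e) *
      (FreeGroup.of (Γ.τ e))⁻¹ * (FreeGroup.of (Γ.lab e))⁻¹}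

/-- The group `G(Γ)` of the LOT. -/
abbrev group (Γ : LOT V E) := PresentedGroup Γ.rels

end LOT


set_option linter.unusedSectionVars false

namespace Stmt8
open LOT Relation

variable {V E : Type} [Fintype V] [Fintype E] [DecidableEq V]

def Goal (Γ : LOT V E) : Prop :=
  ∃ (S : Set V) (F : Set E) (x : V), Γ.Admissible S F ∧ Γ.ConnectedOn S F ∧
      ¬ S.Subsingleton ∧ S ≠ Set.univ ∧ x ∉ S ∧ Γ.Spans (S ∪ {x})

theorem spanned_mono {Γ : LOT V E} {A B : Set V} (h : A ⊆ B) {v : V} (hv : Γ.Spanned A v) :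
    Γ.Spanned B v := by
  induction hv with
  | base hx => exact Spanned.base (h hx)
  | extendτ hl hi ihl ihi => exact Spanned.extendτ ihl ihi
  | extendι hl hi ihl ihi => exact Spanned.extendι ihl ihi

theorem spanned_idem {Γ : LOT V E} {A : Set V} {v : V}
    (hv : Γ.Spanned (setOf (Γ.Spanned A)) v) : Γ.Spanned A v := by
  induction hv with
  | base hx => exact hx
  | extendτ _ _ ihl ihi => exact Spanned.extendτ ihl ihi
  | extendι _ _ ihl ihi => exact Spanned.extendι ihl ihi

theorem span_via {Γ : LOT V E} {A : Set V} {e : E} {v w : V}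
    (hor : (Γ.ι e = w ∧ Γ.τ e = v) ∨ (Γ.ι e = v ∧ Γ.τ e = w))
    (hl : Γ.Spanned A (Γ.lab e)) (hw : Γ.Spanned A w) : Γ.Spanned A v := by
  rcases hor with ⟨h1, h2⟩ | ⟨h1, h2⟩
  · exact h2 ▸ Spanned.extendτ hl (h1 ▸ hw)
  · exact h1 ▸ Spanned.extendι hl (h2 ▸ hw)

theorem spanned_nonempty {Γ : LOT V E} {A : Set V} {v : V} (h : Γ.Spanned A v) :
    A.Nonempty := by
  induction h with
  | base hx => exact ⟨_, hx⟩
  | extendτ _ _ ih _ => exact ih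
  | extendι _ _ ih _ => exact ih

def clF (Γ : LOT V E) (C : Set V) : Set E := {e | Γ.ι e ∈ C ∧ Γ.τ e ∈ C ∧ Γ.lab e ∈ C}

theorem rel_symm {Γ : LOT V E} {F : Set E} :
    Symmetric (fun p q => ∃ e ∈ F, (Γ.ι e = p ∧ Γ.τ e = q) ∨ (Γ.ι e = q ∧ Γ.τ e = p)) :=
  fun _ _ ⟨e, he, h⟩ => ⟨e, he, h.symm⟩

theorem connected_cl {Γ : LOT V E} {A : Set V}
    (hbase : ∀ x ∈ A, ∀ y ∈ A, Relation.ReflTransGen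
      (fun p q => ∃ e ∈ clF Γ (setOf (Γ.Spanned A)),
        (Γ.ι e = p ∧ Γ.τ e = q) ∨ (Γ.ι e = q ∧ Γ.τ e = p)) x y) :
    Γ.ConnectedOn (setOf (Γ.Spanned A)) (clF Γ (setOf (Γ.Spanned A))) := by
  have aux : ∀ v, Γ.Spanned A v → ∀ s, s ∈ A → Relation.ReflTransGen
      (fun p q => ∃ e ∈ clF Γ (setOf (Γ.Spanned A)),
        (Γ.ι e = p ∧ Γ.τ e = q) ∨ (Γ.ι e = q ∧ Γ.τ e = p)) s v := by
    intro v hv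
    induction hv with
    | base hx => intro s hs; exact hbase s hs _ hx
    | extendτ hl hi ihl ihi =>
      intro s hs
      exact (ihi s hs).tail ⟨_, ⟨hi, Spanned.extendτ hl hi, hl⟩, Or.inl ⟨rfl, rfl⟩⟩
    | extendι hl hi ihl ihi =>
      intro s hs
      exact (ihi s hs).tail ⟨_, ⟨Spanned.extendι hl hi, hi, hl⟩, Or.inr ⟨rfl, rfl⟩⟩
  intro x hx y hy
  obtain ⟨s, hs⟩ := spanned_nonempty hx
  exact Relation.ReflTransGen.trans
    ((@Relation.ReflTransGen.symmetric _ _ ⟨fun _ _ h => rel_symm h⟩).symm _ _ (aux x hx s hs)) (aux y hy s hs)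

theorem exists_cycle (f : V → V) (v₀ : V) :
    ∃ i j : ℕ, 1 ≤ i ∧ i < j ∧ f^[i] v₀ = f^[j] v₀ := by
  classical
  have hcard : (Finset.univ : Finset V).card < (Finset.Icc 1 (Fintype.card V + 1)).card := by
    rw [Nat.card_Icc, Finset.card_univ]; omega
  obtain ⟨i, hi, j, hj, hne, heq⟩ :=
    Finset.exists_ne_map_eq_of_card_lt_of_maps_to hcard
      (f := fun k => f^[k] v₀) (fun k _ => Finset.mem_univ _)
  simp only [Finset.mem_Icc] at hi hj
  rcases lt_or_gt_of_ne hne with h | h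
  · exact ⟨i, j, hi.1, h, heq⟩
  · exact ⟨j, i, hj.1, h, heq.symm⟩

end Stmt8


namespace Stmt8
open LOT Relation

variable {V E : Type} [Fintype V] [Fintype E] [DecidableEq V]

theorem lemA (Γ : LOT V E) (a b : V) (hab : a ≠ b) (ev : V → E) (cv : V → V)
    (hev : ∀ v, v ≠ a → v ≠ b →
      ((Γ.ι (ev v) = cv v ∧ Γ.τ (ev v) = v) ∨ (Γ.ι (ev v) = v ∧ Γ.τ (ev v) = cv v)) ∧
      (cv v = a ∨ cv v = b)) :
    ∀ (n : ℕ) (S : Set V) (F : Set E), Sᶜ.ncard ≤ n →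
      Γ.Admissible S F → Γ.ConnectedOn S F → ¬ S.Subsingleton → S ≠ Set.univ →
      a ∈ S → b ∈ S → (∀ v, Γ.Spanned S v → v ∈ S) → Goal Γ := by
  intro n
  induction n with
  | zero =>
    intro S F hcard _ _ _ hne _ _ _
    exfalso
    obtain ⟨x, hx⟩ := (Set.ne_univ_iff_exists_notMem S).mp hne
    have h0 : Sᶜ.ncard = 0 := Nat.le_zero.mp hcard
    have hemp : Sᶜ = ∅ := (Set.ncard_eq_zero (Set.toFinite _)).mp h0
    exact absurd (show x ∈ (∅ : Set V) from hemp ▸ hx) (Set.notMem_empty x)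
  | succ n ih =>
    intro S F hcard hadm hconn hns hne ha hb hclosed
    classical
    obtain ⟨v₀, hv₀⟩ := (Set.ne_univ_iff_exists_notMem S).mp hne
    set f : V → V := fun v => Γ.lab (ev v) with hf
    have hfM : ∀ v, v ∉ S → f v ∉ S := by
      intro v hv hfv
      have hva : v ≠ a := fun h => hv (h ▸ ha)
      have hvb : v ≠ b := fun h => hv (h ▸ hb)
      obtain ⟨hor, hcv⟩ := hev v hva hvb
      have hwS : cv v ∈ S := by rcases hcv with h | h <;> rw [h] <;> assumption
      exact hv (hclosed v (span_via hor (Spanned.base hfv) (Spanned.base hwS)))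
    have horb : ∀ (w : V), w ∉ S → ∀ k, f^[k] w ∉ S := by
      intro w hw k; induction k with
      | zero => exact hw
      | succ k ihk => rw [Function.iterate_succ_apply']; exact hfM _ ihk
    obtain ⟨i, j, hi1, hij, hcyc0⟩ := exists_cycle f v₀
    set z₀ := f^[i] v₀ with hz₀
    have hz₀M : z₀ ∉ S := horb v₀ hv₀ i
    set m := j - i with hm
    have hm1 : 1 ≤ m := by omega
    have hcyc : f^[m] z₀ = z₀ := by
      rw [hz₀, ← Function.iterate_add_apply]
      have hmi : m + i = j := by omega
      rw [hmi, ← hcyc0]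
    have hSC : ∀ s ∈ S, Γ.Spanned (S ∪ {z₀}) s := fun s hs => Spanned.base (Or.inl hs)
    have hz₀C : Γ.Spanned (S ∪ {z₀}) z₀ := Spanned.base (Or.inr rfl)
    have hdown : ∀ k, k ≤ m → Γ.Spanned (S ∪ {z₀}) (f^[m - k] z₀) := by
      intro k
      induction k with
      | zero => intro _; simpa [hcyc] using hz₀C
      | succ k ihk =>
        intro hk1
        have ihk' := ihk (by omega)
        have hvM : f^[m - (k+1)] z₀ ∉ S := horb z₀ hz₀M _
        have hfv : Γ.Spanned (S ∪ {z₀}) (f (f^[m - (k+1)] z₀)) := by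
          have hstep : f^[m - k] z₀ = f (f^[m - (k+1)] z₀) := by
            have harith : m - k = (m - (k+1)) + 1 := by omega
            rw [harith, Function.iterate_succ_apply']
          rwa [hstep] at ihk'
        have hva : f^[m - (k+1)] z₀ ≠ a := fun h => hvM (h ▸ ha)
        have hvb : f^[m - (k+1)] z₀ ≠ b := fun h => hvM (h ▸ hb)
        obtain ⟨hor, hcv⟩ := hev _ hva hvb
        have hwC : Γ.Spanned (S ∪ {z₀}) (cv (f^[m - (k+1)] z₀)) := by
          rcases hcv with h | h
          · exact h ▸ Spanned.base (Or.inl ha)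
          · exact h ▸ Spanned.base (Or.inl hb)
        exact span_via hor hfv hwC
    have hfz₀ : Γ.Spanned (S ∪ {z₀}) (f z₀) := by
      have h := hdown (m - 1) (by omega)
      have h1 : m - (m - 1) = 1 := by omega
      rwa [h1, Function.iterate_one] at h
    by_cases hCu : ∀ v, Γ.Spanned (S ∪ {z₀}) v
    · exact ⟨S, F, z₀, hadm, hconn, hns, hne, hz₀M, hCu⟩
    · push_neg at hCu
      obtain ⟨w, hw⟩ := hCu
      set C := setOf (Γ.Spanned (S ∪ {z₀})) with hC
      have hCne : C ≠ Set.univ := fun h => hw (show w ∈ C from h ▸ Set.mem_univ w)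
      have hcvz : cv z₀ ∈ S := by
        have hva : z₀ ≠ a := fun h => hz₀M (h ▸ ha)
        have hvb : z₀ ≠ b := fun h => hz₀M (h ▸ hb)
        obtain ⟨_, hcv⟩ := hev z₀ hva hvb
        rcases hcv with h | h <;> rw [h] <;> assumption
      have hstep : (fun p q => ∃ e ∈ clF Γ C,
          (Γ.ι e = p ∧ Γ.τ e = q) ∨ (Γ.ι e = q ∧ Γ.τ e = p)) z₀ (cv z₀) := by
        have hva : z₀ ≠ a := fun h => hz₀M (h ▸ ha)
        have hvb : z₀ ≠ b := fun h => hz₀M (h ▸ hb)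
        obtain ⟨hor, hcv⟩ := hev z₀ hva hvb
        refine ⟨ev z₀, ?_, ?_⟩
        · rcases hor with ⟨h1, h2⟩ | ⟨h1, h2⟩ <;>
            exact ⟨by rw [h1]; first | exact hSC _ hcvz | exact hz₀C,
                   by rw [h2]; first | exact hSC _ hcvz | exact hz₀C, hfz₀⟩
        · rcases hor with ⟨h1, h2⟩ | ⟨h1, h2⟩
          · exact Or.inr ⟨h1, h2⟩
          · exact Or.inl ⟨h1, h2⟩
      have hSS : ∀ x ∈ S, ∀ y ∈ S, Relation.ReflTransGen (fun p q => ∃ e ∈ clF Γ C,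
          (Γ.ι e = p ∧ Γ.τ e = q) ∨ (Γ.ι e = q ∧ Γ.τ e = p)) x y := by
        intro x hx y hy
        refine Relation.ReflTransGen.mono ?_ _ _ (hconn x hx y hy)
        rintro p q ⟨e, heF, hor⟩
        obtain ⟨h1, h2, h3⟩ := hadm e heF
        exact ⟨e, ⟨hSC _ h1, hSC _ h2, hSC _ h3⟩, hor⟩
      have hbase : ∀ x ∈ S ∪ {z₀}, ∀ y ∈ S ∪ {z₀}, Relation.ReflTransGen
          (fun p q => ∃ e ∈ clF Γ C,
            (Γ.ι e = p ∧ Γ.τ e = q) ∨ (Γ.ι e = q ∧ Γ.τ e = p)) x y := by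
        have toS : ∀ x ∈ S ∪ {z₀}, Relation.ReflTransGen (fun p q => ∃ e ∈ clF Γ C,
            (Γ.ι e = p ∧ Γ.τ e = q) ∨ (Γ.ι e = q ∧ Γ.τ e = p)) x (cv z₀) := by
          rintro x (hx | hx)
          · exact hSS x hx _ hcvz
          · rw [hx]
            exact Relation.ReflTransGen.single hstep
        intro x hx y hy
        exact Relation.ReflTransGen.trans (toS x hx)
          ((@Relation.ReflTransGen.symmetric _ _ ⟨fun _ _ h => rel_symm h⟩).symm _ _ (toS y hy))
      have hconnC := connected_cl (Γ := Γ) (A := S ∪ {z₀}) hbase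
      have hadmC : Γ.Admissible C (clF Γ C) := fun e he => he
      have hclosedC : ∀ v, Γ.Spanned C v → v ∈ C := fun v hv => spanned_idem hv
      have hnsC : ¬ C.Subsingleton := fun h => hns (h.anti (fun s hs => hSC s hs))
      have hcardC : Cᶜ.ncard ≤ n := by
        have hsub : Cᶜ ⊂ Sᶜ := by
          rw [Set.ssubset_def]
          constructor
          · intro v hv
            exact fun hvS => hv (hSC v hvS)
          · intro hss
            exact (hss (hz₀M : z₀ ∈ Sᶜ)) hz₀C
        have := Set.ncard_lt_ncard hsub (Set.toFinite _)
        omega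
      exact ih C (clF Γ C) hcardC hadmC hconnC hnsC hCne (hSC a ha) (hSC b hb) hclosedC

end Stmt8

namespace Stmt8
open LOT Relation

variable {V E : Type} [Fintype V] [Fintype E] [DecidableEq V]

theorem lemB (Γ : LOT V E) (a b : V) (hab : a ≠ b) (e0 : E)
    (he0 : (Γ.ι e0 = a ∧ Γ.τ e0 = b) ∨ (Γ.ι e0 = b ∧ Γ.τ e0 = a))
    (ev : V → E) (cv : V → V)
    (hev : ∀ v, v ≠ a → v ≠ b →
      ((Γ.ι (ev v) = cv v ∧ Γ.τ (ev v) = v) ∨ (Γ.ι (ev v) = v ∧ Γ.τ (ev v) = cv v)) ∧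
      (cv v = a ∨ cv v = b))
    (S : Set V) (F : Set E)
    (hadm : Γ.Admissible S F) (hconn : Γ.ConnectedOn S F)
    (hns : ¬ S.Subsingleton) (hne : S ≠ Set.univ)
    (ha : a ∈ S) (hbM : b ∉ S)
    (hclosed : ∀ v, Γ.Spanned S v → v ∈ S) : Goal Γ := by
  classical
  have he0' : (Γ.ι e0 = a ∧ Γ.τ e0 = b) ∨ (Γ.ι e0 = b ∧ Γ.τ e0 = a) := he0
  have hlab0M : Γ.lab e0 ∉ S := by
    intro h
    have hsp : Γ.Spanned S b :=
      span_via (v := b) (w := a) he0 (Spanned.base h) (Spanned.base ha)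
    exact hbM (hclosed _ hsp)
  set g : V → V := fun v =>
    if v = b then Γ.lab e0 else if Γ.lab (ev v) ∈ S then b else Γ.lab (ev v) with hg
  have hgb : g b = Γ.lab e0 := by simp [hg]
  have hgM : ∀ v, v ∉ S → g v ∉ S := by
    intro v hv
    by_cases hvb : v = b
    · rw [hvb, hgb]; exact hlab0M
    · show (if v = b then Γ.lab e0 else if Γ.lab (ev v) ∈ S then b else Γ.lab (ev v)) ∉ S
      rw [if_neg hvb]
      split_ifs with h
      · exact hbM
      · exact h
  have horb : ∀ k, g^[k] b ∉ S := by
    intro k; induction k with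
    | zero => exact hbM
    | succ k ihk => rw [Function.iterate_succ_apply']; exact hgM _ ihk
  by_cases hper : ∃ k, 0 < k ∧ g^[k] b = b
  · obtain ⟨k, hk0, hkb⟩ := hper
    have hSC : ∀ s ∈ S, Γ.Spanned (S ∪ {b}) s := fun s hs => Spanned.base (Or.inl hs)
    have hbC : Γ.Spanned (S ∪ {b}) b := Spanned.base (Or.inr rfl)
    have hdown : ∀ j, j ≤ k → Γ.Spanned (S ∪ {b}) (g^[k - j] b) := by
      intro j
      induction j with
      | zero => intro _; simpa [hkb] using hbC
      | succ j ihj =>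
        intro hj
        have ihj' := ihj (by omega)
        by_cases hvb : g^[k - (j+1)] b = b
        · rw [hvb]; exact hbC
        · have hvM : g^[k - (j+1)] b ∉ S := horb _
          have hva : g^[k - (j+1)] b ≠ a := fun h => hvM (h ▸ ha)
          obtain ⟨hor, hcv⟩ := hev _ hva hvb
          have hwC : Γ.Spanned (S ∪ {b}) (cv (g^[k - (j+1)] b)) := by
            rcases hcv with h | h
            · rw [h]; exact Spanned.base (Or.inl ha)
            · rw [h]; exact Spanned.base (Or.inr rfl)
          have hgv : g (g^[k - (j+1)] b) = g^[k - j] b := by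
            have harith : k - j = (k - (j+1)) + 1 := by omega
            rw [harith, Function.iterate_succ_apply']
          by_cases hlabS : Γ.lab (ev (g^[k - (j+1)] b)) ∈ S
          · exact span_via hor (Spanned.base (Or.inl hlabS)) hwC
          · have heq : g (g^[k - (j+1)] b) = Γ.lab (ev (g^[k - (j+1)] b)) := by
              show (if g^[k - (j+1)] b = b then Γ.lab e0 else _) = _
              rw [if_neg hvb, if_neg hlabS]
            have hlabC : Γ.Spanned (S ∪ {b}) (Γ.lab (ev (g^[k - (j+1)] b))) := by
              rw [← heq, hgv]; exact ihj'
            exact span_via hor hlabC hwC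
    have hlab0C : Γ.Spanned (S ∪ {b}) (Γ.lab e0) := by
      have h := hdown (k - 1) (by omega)
      have h1 : k - (k - 1) = 1 := by omega
      rw [h1, Function.iterate_one] at h
      rwa [hgb] at h
    by_cases hCu : ∀ v, Γ.Spanned (S ∪ {b}) v
    · exact ⟨S, F, b, hadm, hconn, hns, hne, hbM, hCu⟩
    · push_neg at hCu
      obtain ⟨w, hw⟩ := hCu
      set C := setOf (Γ.Spanned (S ∪ {b})) with hC
      have hCne : C ≠ Set.univ := fun h => hw (show w ∈ C from h ▸ Set.mem_univ w)
      have hstep : (fun p q => ∃ e ∈ clF Γ C,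
          (Γ.ι e = p ∧ Γ.τ e = q) ∨ (Γ.ι e = q ∧ Γ.τ e = p)) b a := by
        refine ⟨e0, ?_, ?_⟩
        · rcases he0' with ⟨h1, h2⟩ | ⟨h1, h2⟩ <;>
            exact ⟨by rw [h1]; first | exact hSC _ ha | exact hbC,
                   by rw [h2]; first | exact hSC _ ha | exact hbC, hlab0C⟩
        · rcases he0' with ⟨h1, h2⟩ | ⟨h1, h2⟩
          · exact Or.inr ⟨h1, h2⟩
          · exact Or.inl ⟨h1, h2⟩
      have hSS : ∀ x ∈ S, ∀ y ∈ S, Relation.ReflTransGen (fun p q => ∃ e ∈ clF Γ C,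
          (Γ.ι e = p ∧ Γ.τ e = q) ∨ (Γ.ι e = q ∧ Γ.τ e = p)) x y := by
        intro x hx y hy
        refine Relation.ReflTransGen.mono ?_ _ _ (hconn x hx y hy)
        rintro p q ⟨e, heF, hor⟩
        obtain ⟨h1, h2, h3⟩ := hadm e heF
        exact ⟨e, ⟨hSC _ h1, hSC _ h2, hSC _ h3⟩, hor⟩
      have hbase : ∀ x ∈ S ∪ {b}, ∀ y ∈ S ∪ {b}, Relation.ReflTransGen
          (fun p q => ∃ e ∈ clF Γ C,
            (Γ.ι e = p ∧ Γ.τ e = q) ∨ (Γ.ι e = q ∧ Γ.τ e = p)) x y := by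
        have toA : ∀ x ∈ S ∪ {b}, Relation.ReflTransGen (fun p q => ∃ e ∈ clF Γ C,
            (Γ.ι e = p ∧ Γ.τ e = q) ∨ (Γ.ι e = q ∧ Γ.τ e = p)) x a := by
          rintro x (hx | hx)
          · exact hSS x hx a ha
          · rw [hx]; exact Relation.ReflTransGen.single hstep
        intro x hx y hy
        exact Relation.ReflTransGen.trans (toA x hx)
          ((@Relation.ReflTransGen.symmetric _ _ ⟨fun _ _ h => rel_symm h⟩).symm _ _ (toA y hy))
      have hconnC := connected_cl (Γ := Γ) (A := S ∪ {b}) hbase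
      have hadmC : Γ.Admissible C (clF Γ C) := fun e he => he
      have hclosedC : ∀ v, Γ.Spanned C v → v ∈ C := fun v hv => spanned_idem hv
      have hnsC : ¬ C.Subsingleton := fun h => hns (h.anti (fun s hs => hSC s hs))
      exact lemA Γ a b hab ev cv hev Cᶜ.ncard C (clF Γ C) le_rfl hadmC hconnC hnsC hCne
        (hSC a ha) hbC hclosedC
  · push_neg at hper
    have hper' : ∀ k, 0 < k → g^[k] b ≠ b := hper
    have hkey : ∀ k, 1 ≤ k → Γ.lab (ev (g^[k] b)) = g^[k+1] b := by
      intro k hk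
      have hvb : g^[k] b ≠ b := hper' k (by omega)
      have hgv : g (g^[k] b) = g^[k+1] b := (Function.iterate_succ_apply' g k b).symm
      have hnb : g^[k+1] b ≠ b := hper' (k+1) (by omega)
      by_cases hlabS : Γ.lab (ev (g^[k] b)) ∈ S
      · exfalso
        apply hnb
        rw [← hgv]
        show (if g^[k] b = b then Γ.lab e0 else _) = b
        rw [if_neg hvb, if_pos hlabS]
      · rw [← hgv]
        show _ = (if g^[k] b = b then Γ.lab e0 else _)
        rw [if_neg hvb, if_neg hlabS]
    obtain ⟨i, j, hi1, hij, hijeq⟩ := exists_cycle g b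
    set N := j - 1 with hN
    have hN1 : 1 ≤ N := by omega
    set S' : Set V := {v | v = a ∨ v = b ∨ ∃ k, 1 ≤ k ∧ k ≤ N ∧ v = g^[k] b} with hS'
    have hS'a : a ∈ S' := Or.inl rfl
    have hS'b : b ∈ S' := Or.inr (Or.inl rfl)
    have hS'o : ∀ k, 1 ≤ k → k ≤ N → g^[k] b ∈ S' := fun k h1 h2 => Or.inr (Or.inr ⟨k, h1, h2, rfl⟩)
    have hwrap : ∀ k, 1 ≤ k → k ≤ N → g^[k+1] b ∈ S' := by
      intro k hk1 hkN
      by_cases h : k + 1 ≤ N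
      · exact hS'o (k+1) (by omega) h
      · have hkN' : k + 1 = j := by omega
        have heq2 : g^[k+1] b = g^[i] b := by rw [hkN', ← hijeq]
        rw [heq2]
        exact hS'o i hi1 (by omega)
    set F' : Set E := {e | Γ.ι e ∈ S' ∧ Γ.τ e ∈ S' ∧ Γ.lab e ∈ S'} with hF'
    have hadm' : Γ.Admissible S' F' := fun e he => he
    have hlab01 : Γ.lab e0 = g^[1] b := by rw [Function.iterate_one, hgb]
    have he0F : e0 ∈ F' := by
      refine ⟨?_, ?_, by rw [hlab01]; exact hS'o 1 le_rfl hN1⟩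
      · rcases he0' with ⟨h1, _⟩ | ⟨h1, _⟩ <;> rw [h1] <;> first | exact hS'a | exact hS'b
      · rcases he0' with ⟨_, h2⟩ | ⟨_, h2⟩ <;> rw [h2] <;> first | exact hS'a | exact hS'b
    have hstepab : (fun p q => ∃ e ∈ F',
        (Γ.ι e = p ∧ Γ.τ e = q) ∨ (Γ.ι e = q ∧ Γ.τ e = p)) a b := by
      refine ⟨e0, he0F, ?_⟩
      rcases he0' with ⟨h1, h2⟩ | ⟨h1, h2⟩
      · exact Or.inl ⟨h1, h2⟩
      · exact Or.inr ⟨h1, h2⟩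
    have hOconn : ∀ v ∈ S', Relation.ReflTransGen (fun p q => ∃ e ∈ F',
        (Γ.ι e = p ∧ Γ.τ e = q) ∨ (Γ.ι e = q ∧ Γ.τ e = p)) a v := by
      rintro v (hv | hv | ⟨k, hk1, hkN, hkv⟩)
      · rw [hv]
      · rw [hv]; exact Relation.ReflTransGen.single hstepab
      · have hvb : v ≠ b := by rw [hkv]; exact hper' k (by omega)
        have hvM : v ∉ S := by rw [hkv]; exact horb k
        have hva : v ≠ a := fun h => hvM (h ▸ ha)
        obtain ⟨hor, hcv⟩ := hev v hva hvb
        have hevF : ev v ∈ F' := by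
          have hvS' : v ∈ S' := Or.inr (Or.inr ⟨k, hk1, hkN, hkv⟩)
          have hcvS' : cv v ∈ S' := by rcases hcv with h | h <;> rw [h] <;>
            first | exact hS'a | exact hS'b
          have hlabS' : Γ.lab (ev v) ∈ S' := by
            rw [hkv, hkey k hk1]
            exact hwrap k hk1 hkN
          rcases hor with ⟨h1, h2⟩ | ⟨h1, h2⟩
          · exact ⟨by rw [h1]; exact hcvS', by rw [h2]; exact hvS', hlabS'⟩
          · exact ⟨by rw [h1]; exact hvS', by rw [h2]; exact hcvS', hlabS'⟩
        have hstepv : (fun p q => ∃ e ∈ F',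
            (Γ.ι e = p ∧ Γ.τ e = q) ∨ (Γ.ι e = q ∧ Γ.τ e = p)) (cv v) v := by
          refine ⟨ev v, hevF, ?_⟩
          rcases hor with ⟨h1, h2⟩ | ⟨h1, h2⟩
          · exact Or.inl ⟨h1, h2⟩
          · exact Or.inr ⟨h1, h2⟩
        have htocv : Relation.ReflTransGen (fun p q => ∃ e ∈ F',
            (Γ.ι e = p ∧ Γ.τ e = q) ∨ (Γ.ι e = q ∧ Γ.τ e = p)) a (cv v) := by
          rcases hcv with h | h
          · rw [h]
          · rw [h]; exact Relation.ReflTransGen.single hstepab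
        exact htocv.tail hstepv
    have hconn' : Γ.ConnectedOn S' F' := by
      intro x hx y hy
      exact Relation.ReflTransGen.trans
        ((@Relation.ReflTransGen.symmetric _ _ ⟨fun _ _ h => rel_symm h⟩).symm _ _ (hOconn x hx)) (hOconn y hy)
    have hnsS' : ¬ S'.Subsingleton := fun h => hab (h hS'a hS'b)
    obtain ⟨x, hxS, y, hyS, hxy⟩ := Set.not_subsingleton_iff.mp hns
    have hq : ∃ q, q ∈ S ∧ q ≠ a := by
      by_cases hxa : x = a
      · exact ⟨y, hyS, fun h => hxy (by rw [hxa, h])⟩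
      · exact ⟨x, hxS, hxa⟩
    obtain ⟨q, hqS, hqa⟩ := hq
    have hqS' : q ∉ S' := by
      rintro (h | h | ⟨k, hk1, _, hkq⟩)
      · exact hqa h
      · exact hbM (h ▸ hqS)
      · exact (horb k) (hkq ▸ hqS)
    have hS'ne : S' ≠ Set.univ := fun h => hqS' (h ▸ Set.mem_univ q)
    by_cases hCu : ∀ v, Γ.Spanned S' v
    · exact ⟨S', F', q, hadm', hconn', hnsS', hS'ne, hqS',
        fun v => spanned_mono Set.subset_union_left (hCu v)⟩
    · push_neg at hCu
      obtain ⟨w, hw⟩ := hCu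
      set C := setOf (Γ.Spanned S') with hC
      have hCne : C ≠ Set.univ := fun h => hw (show w ∈ C from h ▸ Set.mem_univ w)
      have hS'C : ∀ s ∈ S', s ∈ C := fun s hs => Spanned.base hs
      have hbase : ∀ x ∈ S', ∀ y ∈ S', Relation.ReflTransGen
          (fun p q => ∃ e ∈ clF Γ C,
            (Γ.ι e = p ∧ Γ.τ e = q) ∨ (Γ.ι e = q ∧ Γ.τ e = p)) x y := by
        intro x hx y hy
        refine Relation.ReflTransGen.mono ?_ _ _ (hconn' x hx y hy)
        rintro p q ⟨e, heF, hor⟩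
        obtain ⟨h1, h2, h3⟩ := hadm' e heF
        exact ⟨e, ⟨hS'C _ h1, hS'C _ h2, hS'C _ h3⟩, hor⟩
      have hconnC := connected_cl (Γ := Γ) (A := S') hbase
      have hadmC : Γ.Admissible C (clF Γ C) := fun e he => he
      have hclosedC : ∀ v, Γ.Spanned C v → v ∈ C := fun v hv => spanned_idem hv
      have hnsC : ¬ C.Subsingleton := fun h => hnsS' (h.anti (fun s hs => hS'C s hs))
      exact lemA Γ a b hab ev cv hev Cᶜ.ncard C (clF Γ C) le_rfl hadmC hconnC hnsC hCne
        (hS'C a hS'a) (hS'C b hS'b) hclosedC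

end Stmt8

namespace Stmt8
open SimpleGraph

section Walks
variable {V : Type} {G : SimpleGraph V}

def W1 {x y : V} (h1 : G.Adj x y) : G.Walk x y :=
  SimpleGraph.Walk.cons h1 SimpleGraph.Walk.nil

def W2 {x y z : V} (h1 : G.Adj x y) (h2 : G.Adj y z) : G.Walk x z :=
  SimpleGraph.Walk.cons h1 (W1 h2)

def W3 {x y z w : V} (h1 : G.Adj x y) (h2 : G.Adj y z) (h3 : G.Adj z w) : G.Walk x w :=
  SimpleGraph.Walk.cons h1 (W2 h2 h3)

def W4 {v1 v2 v3 v4 v5 : V} (h1 : G.Adj v1 v2) (h2 : G.Adj v2 v3) (h3 : G.Adj v3 v4)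
    (h4 : G.Adj v4 v5) : G.Walk v1 v5 :=
  SimpleGraph.Walk.cons h1 (W3 h2 h3 h4)

theorem W1_isPath {x y : V} (h1 : G.Adj x y) : (W1 h1).IsPath := by
  simp [W1, SimpleGraph.Walk.isPath_def, h1.ne]

theorem W2_isPath {x y z : V} (h1 : G.Adj x y) (h2 : G.Adj y z) (hxz : x ≠ z) :
    (W2 h1 h2).IsPath := by
  simp [W2, W1, SimpleGraph.Walk.isPath_def, h1.ne, h2.ne, hxz]

theorem W3_isPath {x y z w : V} (h1 : G.Adj x y) (h2 : G.Adj y z) (h3 : G.Adj z w)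
    (hxz : x ≠ z) (hxw : x ≠ w) (hyw : y ≠ w) : (W3 h1 h2 h3).IsPath := by
  simp [W3, W2, W1, SimpleGraph.Walk.isPath_def, h1.ne, h2.ne, h3.ne, hxz, hxw, hyw]

theorem W4_isPath {v1 v2 v3 v4 v5 : V} (h1 : G.Adj v1 v2) (h2 : G.Adj v2 v3)
    (h3 : G.Adj v3 v4) (h4 : G.Adj v4 v5) (h13 : v1 ≠ v3) (h14 : v1 ≠ v4) (h15 : v1 ≠ v5)
    (h24 : v2 ≠ v4) (h25 : v2 ≠ v5) (h35 : v3 ≠ v5) : (W4 h1 h2 h3 h4).IsPath := by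
  simp [W4, W3, W2, W1, SimpleGraph.Walk.isPath_def, h1.ne, h2.ne, h3.ne, h4.ne,
    h13, h14, h15, h24, h25, h35]

theorem W1_length {x y : V} (h1 : G.Adj x y) : (W1 h1).length = 1 := rfl
theorem W2_length {x y z : V} (h1 : G.Adj x y) (h2 : G.Adj y z) : (W2 h1 h2).length = 2 := rfl
theorem W3_length {x y z w : V} (h1 : G.Adj x y) (h2 : G.Adj y z) (h3 : G.Adj z w) :
    (W3 h1 h2 h3).length = 3 := rfl
theorem W4_length {v1 v2 v3 v4 v5 : V} (h1 : G.Adj v1 v2) (h2 : G.Adj v2 v3)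
    (h3 : G.Adj v3 v4) (h4 : G.Adj v4 v5) : (W4 h1 h2 h3 h4).length = 4 := rfl

end Walks

theorem graph_lemma {V : Type} [Fintype V] (G : SimpleGraph V) (ht : G.IsTree)
    (hd : ∀ x y : V, G.dist x y ≤ 3) (hV : ∃ x y : V, x ≠ y) :
    ∃ a b : V, G.Adj a b ∧ ∀ u v : V, G.Adj u v → u = a ∨ u = b ∨ v = a ∨ v = b := by
  classical
  have hpre := ht.isConnected.preconnected
  have HL : ∀ {u v : V} (p q : G.Walk u v), p.IsPath → q.IsPath → p.length = q.length := by
    intro u v p q hp hq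
    obtain ⟨r, _, hr⟩ := ht.existsUnique_path u v
    rw [hr p hp, hr q hq]
  have hP3 : ∀ {u v : V} (p : G.Walk u v), p.IsPath → p.length ≤ 3 := by
    intro u v p hp
    obtain ⟨w, hw⟩ := ht.isConnected.exists_walk_length_eq_dist u v
    have h1 : p.length = w.bypass.length := HL p w.bypass hp w.bypass_isPath
    have h2 := SimpleGraph.Walk.length_bypass_le w
    have h3 := hd u v
    omega
  have getPath : ∀ u v : V, ∃ p : G.Walk u v, p.IsPath := by
    intro u v
    obtain ⟨w⟩ := hpre u v
    exact ⟨w.bypass, w.bypass_isPath⟩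
  by_cases h3 : ∃ p0 p1 p2 p3 : V,
      G.Adj p0 p1 ∧ G.Adj p1 p2 ∧ G.Adj p2 p3 ∧ p0 ≠ p2 ∧ p1 ≠ p3 ∧ p0 ≠ p3
  · obtain ⟨p0, p1, p2, p3, h01, h12, h23, h02, h13, h03⟩ := h3
    have cl1 : ∀ w : V, w ≠ p1 → w ≠ p2 → G.Adj w p1 ∨ G.Adj w p2 := by
      intro w hw1 hw2
      by_cases hw0 : w = p0
      · exact Or.inl (by rw [hw0]; exact h01)
      by_cases hw3 : w = p3
      · exact Or.inr (by rw [hw3]; exact h23.symm)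
      obtain ⟨R, hR⟩ := getPath p1 w
      cases R with
      | nil => exact absurd rfl (Ne.symm hw1)
      | @cons _ z _ h1z R1 =>
        cases R1 with
        | nil => exact Or.inl h1z.symm
        | @cons _ z2 _ hz2 R2 =>
          cases R2 with
          | nil =>
            -- length 2 : p1 — z — w
            by_cases hzp2 : z = p2
            · exact Or.inr (by rw [← hzp2]; exact hz2.symm)
            by_cases hzp3 : z = p3
            · exfalso
              have hAdj : G.Adj p1 p3 := by rw [← hzp3]; exact h1z
              have := HL (W1 hAdj) (W2 h12 h23) (W1_isPath _) (W2_isPath h12 h23 h13)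
              rw [W1_length, W2_length] at this; omega
            by_cases hzp0 : z = p0
            · exfalso
              have hAdj : G.Adj p0 w := by rw [← hzp0]; exact hz2
              have hp := W4_isPath h23.symm h12.symm h01.symm hAdj
                (Ne.symm h13) (Ne.symm h03) (Ne.symm hw3) (Ne.symm h02) (Ne.symm hw2)
                (Ne.symm hw1)
              have := hP3 _ hp; rw [W4_length] at this; omega
            · exfalso
              have hp := W4_isPath h23.symm h12.symm h1z hz2
                (Ne.symm h13) (Ne.symm hzp3) (Ne.symm hw3) (Ne.symm hzp2) (Ne.symm hw2)
                (Ne.symm hw1)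
              have := hP3 _ hp; rw [W4_length] at this; omega
          | @cons _ z3 _ hz3 R3 =>
            cases R3 with
            | nil =>
              -- length 3 : p1 — z — z2 — w  (h1z, hz2 : Adj z z2, hz3 : Adj z2 w)
              have hnd := hR.support_nodup
              simp only [SimpleGraph.Walk.support_cons, SimpleGraph.Walk.support_nil,
                List.nodup_cons, List.mem_cons, List.mem_singleton, List.not_mem_nil,
                List.nodup_nil, List.mem_nil_iff, or_false, not_or] at hnd
              obtain ⟨⟨hp1z, hp1z2, hp1w⟩, ⟨hzz2, hzw⟩, hz2w, -⟩ := hnd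
              by_cases hzp2 : z = p2
              · by_cases hz2p3 : z2 = p3
                · exfalso
                  have hAdj : G.Adj p3 w := by rw [← hz2p3]; exact hz3
                  have hp := W4_isPath h01 h12 h23 hAdj h02 h03
                    (Ne.symm hw0) h13 (Ne.symm hw1) (Ne.symm hw2)
                  have := hP3 _ hp; rw [W4_length] at this; omega
                · by_cases hz2p0 : z2 = p0
                  · exfalso
                    have hAdj : G.Adj p0 p2 := by rw [← hz2p0, ← hzp2]; exact hz2.symm
                    have := HL (W1 hAdj) (W2 h01 h12) (W1_isPath _) (W2_isPath h01 h12 h02)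
                    rw [W1_length, W2_length] at this; omega
                  · exfalso
                    have hA1 : G.Adj p2 z2 := by rw [← hzp2]; exact hz2
                    have hp := W4_isPath h01 h12 hA1 hz3 h02 (Ne.symm hz2p0)
                      (Ne.symm hw0) hp1z2 (Ne.symm hw1)
                      (Ne.symm hw2)
                    have := hP3 _ hp; rw [W4_length] at this; omega
              · by_cases hzp3 : z = p3
                · exfalso
                  have hAdj : G.Adj p1 p3 := by rw [← hzp3]; exact h1z
                  have := HL (W1 hAdj) (W2 h12 h23) (W1_isPath _) (W2_isPath h12 h23 h13)
                  rw [W1_length, W2_length] at this; omega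
                · by_cases hzp0 : z = p0
                  · by_cases hz2p2 : z2 = p2
                    · exfalso
                      have hAdj : G.Adj p0 p2 := by rw [← hzp0, ← hz2p2]; exact hz2
                      have := HL (W1 hAdj) (W2 h01 h12) (W1_isPath _) (W2_isPath h01 h12 h02)
                      rw [W1_length, W2_length] at this; omega
                    · by_cases hz2p3 : z2 = p3
                      · exfalso
                        have hAdj : G.Adj p0 p3 := by rw [← hzp0, ← hz2p3]; exact hz2
                        have := HL (W1 hAdj) (W3 h01 h12 h23) (W1_isPath _)
                          (W3_isPath h01 h12 h23 h02 h03 h13)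
                        rw [W1_length, W3_length] at this; omega
                      · exfalso
                        have hA1 : G.Adj p0 z2 := by rw [← hzp0]; exact hz2
                        have hp := W4_isPath h23.symm h12.symm h01.symm hA1
                          (Ne.symm h13) (Ne.symm h03) (Ne.symm hz2p3) (Ne.symm h02)
                          (Ne.symm hz2p2) hp1z2
                        have := hP3 _ hp; rw [W4_length] at this; omega
                  · by_cases hz2p2 : z2 = p2
                    · exact Or.inr (by rw [← hz2p2]; exact hz3.symm)
                    · exfalso
                      have hp := W4_isPath h12.symm h1z hz2 hz3
                        (Ne.symm hzp2) (Ne.symm hz2p2) (Ne.symm hw2) hp1z2 hp1w hzw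
                      have := hP3 _ hp; rw [W4_length] at this; omega
            | cons _ _ =>
              exfalso
              have := hP3 _ hR
              simp [SimpleGraph.Walk.length_cons] at this
              omega
    refine ⟨p1, p2, h12, ?_⟩
    intro u v huv
    by_contra hcon
    push_neg at hcon
    obtain ⟨hu1, hu2, hv1, hv2⟩ := hcon
    rcases cl1 u hu1 hu2 with hup1 | hup2
    · rcases cl1 v hv1 hv2 with hvp1 | hvp2
      · have := HL (W1 huv) (W2 hup1 hvp1.symm) (W1_isPath _) (W2_isPath hup1 hvp1.symm huv.ne)
        rw [W1_length, W2_length] at this; omega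
      · have := HL (W1 h12) (W3 hup1.symm huv hvp2) (W1_isPath _)
          (W3_isPath hup1.symm huv hvp2 (Ne.symm hv1) h12.ne hu2)
        rw [W1_length, W3_length] at this; omega
    · rcases cl1 v hv1 hv2 with hvp1 | hvp2
      · have := HL (W1 h12) (W3 hvp1.symm huv.symm hup2) (W1_isPath _)
          (W3_isPath hvp1.symm huv.symm hup2 (Ne.symm hu1) h12.ne hv2)
        rw [W1_length, W3_length] at this; omega
      · have := HL (W1 huv) (W2 hup2 hvp2.symm) (W1_isPath _) (W2_isPath hup2 hvp2.symm huv.ne)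
        rw [W1_length, W2_length] at this; omega
  · -- no 3-chain : star case
    have h3' : ∀ p0 p1 p2 p3 : V, G.Adj p0 p1 → G.Adj p1 p2 → G.Adj p2 p3 →
        p0 ≠ p2 → p1 ≠ p3 → p0 ≠ p3 → False :=
      fun p0 p1 p2 p3 ha hb hc hd' he hf => h3 ⟨p0, p1, p2, p3, ha, hb, hc, hd', he, hf⟩
    obtain ⟨x₀, y₀, hxy₀⟩ := hV
    obtain ⟨p, hp⟩ := getPath x₀ y₀
    have hedge : ∃ x m : V, G.Adj x m := by
      cases p with
      | nil => exact absurd rfl hxy₀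
      | cons h _ => exact ⟨_, _, h⟩
    obtain ⟨x, m, hxm⟩ := hedge
    have meet : ∀ s t : V, G.Adj s t → s ≠ x → s ≠ m → t ≠ x → t ≠ m → False := by
      intro s t hst hsx hsm htx htm
      obtain ⟨P, hP⟩ := getPath m s
      cases P with
      | nil => exact hsm rfl
      | @cons _ z _ h1 P1 =>
        cases P1 with
        | nil =>
          exact h3' x m s t hxm h1 hst (Ne.symm hsx) (Ne.symm htm) (Ne.symm htx)
        | @cons _ z2 _ h2 P2 =>
          cases P2 with
          | nil =>
            -- m — z — s
            by_cases hzx : z = x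
            · have hA1 : G.Adj m x := by rw [← hzx]; exact h1
              have hA2 : G.Adj x s := by rw [← hzx]; exact h2
              exact h3' m x s t hA1 hA2 hst (Ne.symm hsm) (Ne.symm htx) (Ne.symm htm)
            · by_cases hzt : z = t
              · have hA1 : G.Adj m t := by rw [← hzt]; exact h1
                have hA2 : G.Adj t s := by rw [← hzt]; exact h2
                exact h3' x m t s hxm hA1 hA2 (Ne.symm htx) (Ne.symm hsm) (Ne.symm hsx)
              · exact h3' x m z s hxm h1 h2 (fun h => hzx h.symm) (Ne.symm hsm) (Ne.symm hsx)
          | @cons _ z3 _ h3'' P3' =>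
            cases P3' with
            | nil =>
              -- m — z — z2 — s
              have hnd := hP.support_nodup
              simp only [SimpleGraph.Walk.support_cons, SimpleGraph.Walk.support_nil,
                List.nodup_cons, List.mem_cons, List.mem_singleton, List.not_mem_nil,
                List.nodup_nil, or_false, not_or] at hnd
              obtain ⟨⟨hmz, hmz2, hms⟩, ⟨hzz2, hzs⟩, hz2s, -⟩ := hnd
              exact h3' m z z2 s h1 h2 h3'' hmz2 hzs hms
            | cons _ _ =>
              have := hP3 _ hP
              simp [SimpleGraph.Walk.length_cons] at this
              omega
    refine ⟨x, m, hxm, ?_⟩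
    intro u v huv
    by_contra hcon
    push_neg at hcon
    obtain ⟨hu1, hu2, hv1, hv2⟩ := hcon
    exact meet u v huv hu1 hu2 hv1 hv2

end Stmt8

namespace Stmt8
open LOT Relation

variable {V E : Type} [Fintype V] [Fintype E] [DecidableEq V]

theorem pipeline (Γ : LOT V E) (a b : V) (hab : a ≠ b) (e0 : E)
    (he0 : (Γ.ι e0 = a ∧ Γ.τ e0 = b) ∨ (Γ.ι e0 = b ∧ Γ.τ e0 = a))
    (ev : V → E) (cv : V → V)
    (hev : ∀ v, v ≠ a → v ≠ b →
      ((Γ.ι (ev v) = cv v ∧ Γ.τ (ev v) = v) ∨ (Γ.ι (ev v) = v ∧ Γ.τ (ev v) = cv v)) ∧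
      (cv v = a ∨ cv v = b))
    (S : Set V) (F : Set E)
    (hadm : Γ.Admissible S F) (hconn : Γ.ConnectedOn S F)
    (hns : ¬ S.Subsingleton) (hne : S ≠ Set.univ) (ha : a ∈ S) : Goal Γ := by
  classical
  by_cases hCu : ∀ v, Γ.Spanned S v
  · obtain ⟨z, hz⟩ := (Set.ne_univ_iff_exists_notMem S).mp hne
    exact ⟨S, F, z, hadm, hconn, hns, hne, hz,
      fun v => spanned_mono Set.subset_union_left (hCu v)⟩
  · push_neg at hCu
    obtain ⟨w, hw⟩ := hCu
    set C := setOf (Γ.Spanned S) with hC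
    have hCne : C ≠ Set.univ := fun h => hw (show w ∈ C from h ▸ Set.mem_univ w)
    have hSC : ∀ s ∈ S, s ∈ C := fun s hs => Spanned.base hs
    have hbase : ∀ x ∈ S, ∀ y ∈ S, Relation.ReflTransGen
        (fun p q => ∃ e ∈ clF Γ C,
          (Γ.ι e = p ∧ Γ.τ e = q) ∨ (Γ.ι e = q ∧ Γ.τ e = p)) x y := by
      intro x hx y hy
      refine Relation.ReflTransGen.mono ?_ _ _ (hconn x hx y hy)
      rintro p q ⟨e, heF, hor⟩
      obtain ⟨h1, h2, h3⟩ := hadm e heF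
      exact ⟨e, ⟨hSC _ h1, hSC _ h2, hSC _ h3⟩, hor⟩
    have hconnC := connected_cl (Γ := Γ) (A := S) hbase
    have hadmC : Γ.Admissible C (clF Γ C) := fun e he => he
    have hclosedC : ∀ v, Γ.Spanned C v → v ∈ C := fun v hv => spanned_idem hv
    have hnsC : ¬ C.Subsingleton := fun h => hns (h.anti (fun s hs => hSC s hs))
    by_cases hbC : b ∈ C
    · exact lemA Γ a b hab ev cv hev Cᶜ.ncard C (clF Γ C) le_rfl hadmC hconnC hnsC hCne
        (hSC a ha) hbC hclosedC
    · exact lemB Γ a b hab e0 he0 ev cv hev C (clF Γ C) hadmC hconnC hnsC hCne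
        (hSC a ha) hbC hclosedC

end Stmt8

open LOT in
/-- If a LOT `Γ` of diameter at most 3 contains a proper admissible subtree with
more than one vertex, then there is such an admissible subtree `(S, F)` and a
vertex `x ∉ S` such that `Γ` is spanned by `S ∪ {x}`. -/
theorem stmt8 {V E : Type} [Fintype V] [Fintype E] [DecidableEq V]
    (Γ : LOT V E) (htree : Γ.IsTreeLOT) (hdiam : Γ.diamLe 3)
    (hsub : ∃ (S : Set V) (F : Set E), Γ.Admissible S F ∧ Γ.ConnectedOn S F ∧
      ¬ S.Subsingleton ∧ S ≠ Set.univ) :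
    ∃ (S : Set V) (F : Set E) (x : V), Γ.Admissible S F ∧ Γ.ConnectedOn S F ∧
      ¬ S.Subsingleton ∧ S ≠ Set.univ ∧ x ∉ S ∧ Γ.Spans (S ∪ {x}) := by
  classical
  obtain ⟨S₀, F₀, hadm₀, hconn₀, hns₀, hne₀⟩ := hsub
  obtain ⟨ht, hcardE, hloop⟩ := htree
  obtain ⟨x, hxS, y, hyS, hxy⟩ := Set.not_subsingleton_iff.mp hns₀
  have hV : ∃ x y : V, x ≠ y := ⟨x, y, hxy⟩
  obtain ⟨a, b, hadj, hdom⟩ := Stmt8.graph_lemma Γ.graph ht hdiam hV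
  have hab : a ≠ b := hadj.ne
  have hadj' := hadj
  rw [LOT.graph, SimpleGraph.fromRel_adj] at hadj'
  obtain ⟨-, hor0⟩ := hadj'
  obtain ⟨e0, he0⟩ : ∃ e0, (Γ.ι e0 = a ∧ Γ.τ e0 = b) ∨ (Γ.ι e0 = b ∧ Γ.τ e0 = a) := by
    rcases hor0 with ⟨e, h⟩ | ⟨e, h⟩
    exacts [⟨e, Or.inl h⟩, ⟨e, Or.inr h⟩]
  have hdomE : ∀ e : E, Γ.ι e = a ∨ Γ.ι e = b ∨ Γ.τ e = a ∨ Γ.τ e = b := by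
    intro e
    have hadjE : Γ.graph.Adj (Γ.ι e) (Γ.τ e) := by
      rw [LOT.graph, SimpleGraph.fromRel_adj]
      exact ⟨hloop e, Or.inl ⟨e, rfl, rfl⟩⟩
    rcases hdom _ _ hadjE with h | h | h | h <;> tauto
  have hpick : ∀ v : V, ∃ (ew : E × V), v ≠ a → v ≠ b →
      ((Γ.ι ew.1 = ew.2 ∧ Γ.τ ew.1 = v) ∨ (Γ.ι ew.1 = v ∧ Γ.τ ew.1 = ew.2)) ∧
      (ew.2 = a ∨ ew.2 = b) := by
    intro v
    by_cases hva : v = a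
    · exact ⟨(e0, a), fun h => absurd hva h⟩
    by_cases hvb : v = b
    · exact ⟨(e0, a), fun _ h => absurd hvb h⟩
    -- find an incident edge
    obtain ⟨W⟩ := ht.isConnected.preconnected v a
    have hAdjz : ∃ z, Γ.graph.Adj v z := by
      cases W with
      | nil => exact absurd rfl hva
      | cons h _ => exact ⟨_, h⟩
    obtain ⟨z, hvz⟩ := hAdjz
    rw [LOT.graph, SimpleGraph.fromRel_adj] at hvz
    obtain ⟨hvzne, hor⟩ := hvz
    rcases hor with ⟨e, h1, h2⟩ | ⟨e, h1, h2⟩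
    · -- ι e = v, τ e = z
      have hne2 : Γ.τ e = a ∨ Γ.τ e = b := by
        rcases hdomE e with h | h | h | h
        · exact absurd (h1.symm.trans h) hva
        · exact absurd (h1.symm.trans h) hvb
        · exact Or.inl h
        · exact Or.inr h
      exact ⟨(e, Γ.τ e), fun _ _ => ⟨Or.inr ⟨h1, rfl⟩, hne2⟩⟩
    · -- ι e = z, τ e = v
      have hne2 : Γ.ι e = a ∨ Γ.ι e = b := by
        rcases hdomE e with h | h | h | h
        · exact Or.inl h
        · exact Or.inr h
        · exact absurd (h2.symm.trans h) hva
        · exact absurd (h2.symm.trans h) hvb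
      exact ⟨(e, Γ.ι e), fun _ _ => ⟨Or.inl ⟨rfl, h2⟩, hne2⟩⟩
  choose ew hew using hpick
  set ev : V → E := fun v => (ew v).1 with hev'
  set cv : V → V := fun v => (ew v).2 with hcv'
  have hev : ∀ v, v ≠ a → v ≠ b →
      ((Γ.ι (ev v) = cv v ∧ Γ.τ (ev v) = v) ∨ (Γ.ι (ev v) = v ∧ Γ.τ (ev v) = cv v)) ∧
      (cv v = a ∨ cv v = b) := by
    intro v hva hvb
    obtain ⟨hor, hc⟩ := hew v hva hvb
    constructor
    · rcases hor with ⟨h1, h2⟩ | ⟨h1, h2⟩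
      · exact Or.inl ⟨h1, h2⟩
      · exact Or.inr ⟨h1, h2⟩
    · exact hc
  have hcenter : a ∈ S₀ ∨ b ∈ S₀ := by
    have hrt := hconn₀ x hxS y hyS
    rcases Relation.ReflTransGen.cases_head hrt with heq | ⟨c, ⟨e, heF, hore⟩, -⟩
    · exact absurd heq hxy
    · obtain ⟨h1, h2, -⟩ := hadm₀ e heF
      rcases hdomE e with h | h | h | h
      · exact Or.inl (h ▸ h1)
      · exact Or.inr (h ▸ h1)
      · exact Or.inl (h ▸ h2)
      · exact Or.inr (h ▸ h2)
  rcases hcenter with haS | hbS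
  · exact Stmt8.pipeline Γ a b hab e0 he0 ev cv hev S₀ F₀ hadm₀ hconn₀ hns₀ hne₀ haS
  · have he0' : (Γ.ι e0 = b ∧ Γ.τ e0 = a) ∨ (Γ.ι e0 = a ∧ Γ.τ e0 = b) := he0.symm
    have hev2 : ∀ v, v ≠ b → v ≠ a →
        ((Γ.ι (ev v) = cv v ∧ Γ.τ (ev v) = v) ∨ (Γ.ι (ev v) = v ∧ Γ.τ (ev v) = cv v)) ∧
        (cv v = b ∨ cv v = a) := by
      intro v hvb hva
      obtain ⟨hor, hc⟩ := hev v hva hvb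
      exact ⟨hor, hc.symm⟩
    exact Stmt8.pipeline Γ b a hab.symm e0 he0' ev cv hev2 S₀ F₀ hadm₀ hconn₀ hns₀ hne₀ hbS
end

section
/- Let Γ be a LOT spanned by V(Γ') ∪ {x}, where Γ' is an admissible subtree of Γ and x ∈ V(Γ) \ V(Γ'). Then G(Γ) is a one-relator product of G(Γ') and the infinite cyclic group ⟨x⟩, and the relator is not a proper power. -/
open Subgroup

lemma toGroup_mk {α : Type*} {G : Type*} [Group G] {f : α → G} {rels : Set (FreeGroup α)}
    (h : ∀ r ∈ rels, FreeGroup.lift f r = 1) (x : FreeGroup α) :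
    PresentedGroup.toGroup h (PresentedGroup.mk rels x) = FreeGroup.lift f x := rfl

/-- Master Tietze lemma. -/
noncomputable def presentedEquivOfRetract {X B : Type} (R : Set (FreeGroup X))
    (π : FreeGroup X →* FreeGroup B) (j : FreeGroup B →* FreeGroup X)
    (h1 : ∀ b, π (j (FreeGroup.of b)) = FreeGroup.of b)
    (h2 : ∀ v : X, PresentedGroup.mk R (j (π (FreeGroup.of v)))
        = PresentedGroup.mk R (FreeGroup.of v)) :
    PresentedGroup R ≃* PresentedGroup (π '' R) := by
  have hmkR : ∀ r ∈ R, PresentedGroup.mk R r = 1 := fun r hr =>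
    (QuotientGroup.eq_one_iff _).mpr (Subgroup.subset_normalClosure hr)
  have hmkR' : ∀ r' ∈ π '' R, PresentedGroup.mk (π '' R) r' = 1 := fun r hr =>
    (QuotientGroup.eq_one_iff _).mpr (Subgroup.subset_normalClosure hr)
  have keyΦ : FreeGroup.lift (fun v => PresentedGroup.mk (π '' R) (π (FreeGroup.of v)))
      = (PresentedGroup.mk (π '' R)).comp π :=
    FreeGroup.ext_hom _ _ (fun v => by simp)
  have keyΨ : FreeGroup.lift (fun b => PresentedGroup.mk R (j (FreeGroup.of b)))
      = (PresentedGroup.mk R).comp j :=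
    FreeGroup.ext_hom _ _ (fun b => by simp)
  have keyjπ : (PresentedGroup.mk R).comp (j.comp π) = PresentedGroup.mk R :=
    FreeGroup.ext_hom _ _ (fun v => h2 v)
  have hΦ : ∀ r ∈ R, FreeGroup.lift (fun v => PresentedGroup.mk (π '' R) (π (FreeGroup.of v))) r = 1 := by
    intro r hr; rw [keyΦ]; exact hmkR' _ ⟨r, hr, rfl⟩
  have hΨ : ∀ r' ∈ π '' R, FreeGroup.lift (fun b => PresentedGroup.mk R (j (FreeGroup.of b))) r' = 1 := by
    rintro _ ⟨r, hr, rfl⟩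
    rw [keyΨ]
    have : PresentedGroup.mk R (j (π r)) = PresentedGroup.mk R r := by
      have := congrArg (fun (f : FreeGroup X →* PresentedGroup R) => f r) keyjπ
      simpa using this
    simpa [this] using hmkR r hr
  refine MonoidHom.toMulEquiv (PresentedGroup.toGroup hΦ) (PresentedGroup.toGroup hΨ) ?_ ?_
  · apply PresentedGroup.ext
    intro v
    simp only [MonoidHom.comp_apply, MonoidHom.id_apply]
    rw [PresentedGroup.toGroup.of]
    show PresentedGroup.toGroup hΨ (PresentedGroup.mk _ (π (FreeGroup.of v))) = _
    rw [toGroup_mk, keyΨ]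
    exact h2 v
  · apply PresentedGroup.ext
    intro b
    simp only [MonoidHom.comp_apply, MonoidHom.id_apply]
    rw [PresentedGroup.toGroup.of]
    show PresentedGroup.toGroup hΦ (PresentedGroup.mk _ (j (FreeGroup.of b))) = _
    rw [toGroup_mk, keyΦ]
    simp [h1 b]
    rfl

/-- Presented groups with the same normal closure of relators coincide. -/
noncomputable def presentedEquivOfEq {X : Type} {R₁ R₂ : Set (FreeGroup X)}
    (h : Subgroup.normalClosure R₁ = Subgroup.normalClosure R₂) :
    PresentedGroup R₁ ≃* PresentedGroup R₂ :=
  QuotientGroup.quotientMulEquivOfEq h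

section Assembly
variable {V' : Type} (rels' : Set (FreeGroup V'))

/-- inclusion of free groups -/
def inlF : FreeGroup V' →* FreeGroup (V' ⊕ Unit) := FreeGroup.map Sum.inl

/-- the canonical map from the free group on `V' ⊕ Unit` to the coproduct -/
def θmap : FreeGroup (V' ⊕ Unit) →* Monoid.Coprod (PresentedGroup rels') (FreeGroup Unit) :=
  FreeGroup.lift (Sum.elim (fun v' => Monoid.Coprod.inl (PresentedGroup.of v'))
    (fun _ => Monoid.Coprod.inr (FreeGroup.of ())))

noncomputable def presentedUnionEquiv (w0 : FreeGroup (V' ⊕ Unit)) :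
    PresentedGroup ((inlF '' rels') ∪ {w0}) ≃*
      (Monoid.Coprod (PresentedGroup rels') (FreeGroup Unit) ⧸
        Subgroup.normalClosure {θmap rels' w0}) := by
  classical
  set C := Monoid.Coprod (PresentedGroup rels') (FreeGroup Unit)
  set N := Subgroup.normalClosure {θmap rels' w0}
  set Rall : Set (FreeGroup (V' ⊕ Unit)) := (inlF '' rels') ∪ {w0} with hRall
  have hmkAll : ∀ r ∈ Rall, PresentedGroup.mk Rall r = 1 := fun r hr =>
    (QuotientGroup.eq_one_iff _).mpr (Subgroup.subset_normalClosure hr)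
  -- Forward: toGroup
  have keyf : FreeGroup.lift (fun b => (QuotientGroup.mk' N) (θmap rels' (FreeGroup.of b)))
      = (QuotientGroup.mk' N).comp (θmap rels') :=
    FreeGroup.ext_hom _ _ (fun b => by simp)
  have hθinl : (θmap rels').comp (inlF (V' := V')) =
      (Monoid.Coprod.inl).comp (PresentedGroup.mk rels') :=
    FreeGroup.ext_hom _ _ (fun v' => by simp [θmap, inlF]; rfl)
  have hfwd : ∀ r ∈ Rall,
      FreeGroup.lift (fun b => (QuotientGroup.mk' N) (θmap rels' (FreeGroup.of b))) r = 1 := by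
    intro r hr
    rw [keyf]
    rcases hr with ⟨r', hr', rfl⟩ | hr
    · have : θmap rels' (inlF r') = Monoid.Coprod.inl (PresentedGroup.mk rels' r') := by
        have := congrArg (fun (f : FreeGroup V' →* C) => f r') hθinl
        simpa using this
      have h1 : PresentedGroup.mk rels' r' = 1 :=
        (QuotientGroup.eq_one_iff _).mpr (Subgroup.subset_normalClosure hr')
      simp [MonoidHom.comp_apply, this, h1]
    · rcases hr with rfl
      simp only [MonoidHom.comp_apply]
      exact (QuotientGroup.eq_one_iff _).mpr (Subgroup.subset_normalClosure rfl)
  set Φ : PresentedGroup Rall →* C ⧸ N := PresentedGroup.toGroup hfwd with hΦdef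
  -- Backward
  have hbackrel : ∀ r' ∈ rels',
      FreeGroup.lift (fun v' => (PresentedGroup.of (Sum.inl v') : PresentedGroup Rall)) r' = 1 := by
    have key : FreeGroup.lift (fun v' => (PresentedGroup.of (Sum.inl v') : PresentedGroup Rall))
        = (PresentedGroup.mk Rall).comp inlF :=
      FreeGroup.ext_hom _ _ (fun v' => by simp [inlF]; rfl)
    intro r' hr'
    rw [key]
    exact hmkAll _ (Or.inl ⟨r', hr', rfl⟩)
  set f : PresentedGroup rels' →* PresentedGroup Rall := PresentedGroup.toGroup hbackrel
  set g : FreeGroup Unit →* PresentedGroup Rall :=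
    FreeGroup.lift (fun _ => PresentedGroup.of (Sum.inr ()))
  set L : C →* PresentedGroup Rall := Monoid.Coprod.lift f g with hLdef
  have hLθ : L.comp (θmap rels') = PresentedGroup.mk Rall := by
    apply FreeGroup.ext_hom
    rintro (v' | u)
    · simp [θmap, L, f]
      rfl
    · simp [θmap, L, g]
      rfl
  have hLw : ∀ c ∈ (Subgroup.normalClosure {θmap rels' w0} : Subgroup C), L c = 1 := by
    intro c hc
    refine (Subgroup.normalClosure_le_normal ?_ : _ ≤ L.ker) hc
    intro y hy
    rcases hy with rfl
    have : L (θmap rels' w0) = PresentedGroup.mk Rall w0 := by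
      have := congrArg (fun (h : FreeGroup (V' ⊕ Unit) →* PresentedGroup Rall) => h w0) hLθ
      simpa using this
    simpa [MonoidHom.mem_ker, this] using hmkAll _ (Or.inr rfl)
  set Ψ : C ⧸ N →* PresentedGroup Rall := QuotientGroup.lift N L hLw with hΨdef
  refine MonoidHom.toMulEquiv Φ Ψ ?_ ?_
  · apply PresentedGroup.ext
    rintro b
    simp only [MonoidHom.comp_apply, MonoidHom.id_apply]
    have h1 : Φ (PresentedGroup.of b) = (QuotientGroup.mk' N) (θmap rels' (FreeGroup.of b)) :=
      PresentedGroup.toGroup.of hfwd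
    rw [h1]
    show L (θmap rels' (FreeGroup.of b)) = _
    have := congrArg (fun (h : FreeGroup (V' ⊕ Unit) →* PresentedGroup Rall) =>
      h (FreeGroup.of b)) hLθ
    exact this
  · apply QuotientGroup.monoidHom_ext
    apply Monoid.Coprod.hom_ext
    · apply PresentedGroup.ext
      intro v'
      simp only [MonoidHom.comp_apply, MonoidHom.id_apply]
      show Φ (Ψ (QuotientGroup.mk' N (Monoid.Coprod.inl (PresentedGroup.of v')))) = _
      have h1 : Ψ (QuotientGroup.mk' N (Monoid.Coprod.inl (PresentedGroup.of v')))
          = f (PresentedGroup.of v') := by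
        show L (Monoid.Coprod.inl (PresentedGroup.of v')) = _
        exact Monoid.Coprod.lift_apply_inl f g _
      rw [h1]
      have h2 : f (PresentedGroup.of v') = PresentedGroup.of (Sum.inl v') :=
        PresentedGroup.toGroup.of hbackrel
      rw [h2]
      have h3 : Φ (PresentedGroup.of (Sum.inl v'))
          = (QuotientGroup.mk' N) (θmap rels' (FreeGroup.of (Sum.inl v'))) :=
        PresentedGroup.toGroup.of hfwd
      rw [h3]
      simp only [θmap, FreeGroup.lift_apply_of, Sum.elim_inl]
      rfl
    · apply FreeGroup.ext_hom
      intro u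
      simp only [MonoidHom.comp_apply, MonoidHom.id_apply]
      show Φ (Ψ (QuotientGroup.mk' N (Monoid.Coprod.inr (FreeGroup.of u)))) = _
      have h1 : Ψ (QuotientGroup.mk' N (Monoid.Coprod.inr (FreeGroup.of u)))
          = g (FreeGroup.of u) := by
        show L (Monoid.Coprod.inr (FreeGroup.of u)) = _
        exact Monoid.Coprod.lift_apply_inr f g _
      rw [h1]
      have h2 : g (FreeGroup.of u) = PresentedGroup.of (Sum.inr ()) := by simp [g]
      rw [h2]
      have h3 : Φ (PresentedGroup.of (Sum.inr ()))
          = (QuotientGroup.mk' N) (θmap rels' (FreeGroup.of (Sum.inr ()))) :=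
        PresentedGroup.toGroup.of hfwd
      rw [h3]
      simp only [θmap, FreeGroup.lift_apply_of, Sum.elim_inr]
      rfl

end Assembly

lemma not_proper_power {V' : Type} [Nonempty V'] (rels' : Set (FreeGroup V'))
    (hrel : ∀ r ∈ rels', ∀ (M : Type) [CommGroup M] (z : M), FreeGroup.lift (fun _ => z) r = 1)
    (G : Type) [Group G]
    (hcyc : ∀ (M : Type) [CommGroup M] (f : G →* M), ∃ z : M, ∀ g : G, f g ∈ Subgroup.zpowers z)
    (w u : Monoid.Coprod (PresentedGroup rels') (FreeGroup Unit)) (n : ℕ) (hn : 2 ≤ n)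
    (hw : w = u ^ n)
    (iso : G ≃* (Monoid.Coprod (PresentedGroup rels') (FreeGroup Unit) ⧸
      Subgroup.normalClosure {w})) : False := by
  haveI : NeZero n := ⟨by omega⟩
  let M := Multiplicative (ZMod n × ZMod n)
  let C := Monoid.Coprod (PresentedGroup rels') (FreeGroup Unit)
  have hpow : ∀ x : M, x ^ n = 1 := by
    intro x
    have h0 : (n : ℕ) • x.toAdd = 0 := by
      have : ∀ p : ZMod n × ZMod n, (n : ℕ) • p = 0 := by
        intro p
        have : (n : ℕ) • p = ((n : ℕ) • p.1, (n : ℕ) • p.2) := rfl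
        rw [this]
        simp [nsmul_eq_mul, ZMod.natCast_self, Prod.ext_iff]
      exact this _
    have : x ^ n = Multiplicative.ofAdd ((n : ℕ) • x.toAdd) := by
      rw [ofAdd_nsmul, ofAdd_toAdd]
    rw [this, h0]
    rfl
  set β₁ : PresentedGroup rels' →* M :=
    PresentedGroup.toGroup (f := fun _ => Multiplicative.ofAdd ((1 : ZMod n), (0 : ZMod n)))
      (fun r hr => hrel r hr M _) with hβ₁
  set β₂ : FreeGroup Unit →* M :=
    FreeGroup.lift (fun _ => Multiplicative.ofAdd ((0 : ZMod n), (1 : ZMod n))) with hβ₂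
  set β : C →* M := Monoid.Coprod.lift β₁ β₂ with hβ
  have hβw1 : β w = 1 := by rw [hw, map_pow]; exact hpow _
  have hβw : ∀ c ∈ (Subgroup.normalClosure {w} : Subgroup C), β c = 1 := by
    intro c hc
    refine (Subgroup.normalClosure_le_normal ?_ : _ ≤ β.ker) hc
    intro y hy
    simp only [Set.mem_singleton_iff] at hy
    rw [SetLike.mem_coe, MonoidHom.mem_ker, hy]
    exact hβw1
  set βq : (C ⧸ Subgroup.normalClosure {w}) →* M :=
    QuotientGroup.lift _ β hβw with hβq
  set h : G →* M := βq.comp iso.toMonoidHom with hh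
  obtain ⟨z, hz⟩ := hcyc M h
  obtain ⟨v₀⟩ := ‹Nonempty V'›
  have hz₁ : Multiplicative.ofAdd ((1 : ZMod n), (0 : ZMod n)) ∈ Subgroup.zpowers z := by
    have := hz (iso.symm (QuotientGroup.mk (Monoid.Coprod.inl (PresentedGroup.of v₀))))
    have heq : h (iso.symm (QuotientGroup.mk (Monoid.Coprod.inl (PresentedGroup.of v₀))))
        = Multiplicative.ofAdd ((1 : ZMod n), (0 : ZMod n)) := by
      simp only [hh, MonoidHom.comp_apply, MulEquiv.coe_toMonoidHom, MulEquiv.apply_symm_apply]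
      show β (Monoid.Coprod.inl (PresentedGroup.of v₀)) = _
      rw [hβ, Monoid.Coprod.lift_apply_inl]
      exact PresentedGroup.toGroup.of _
    rwa [heq] at this
  have hz₂ : Multiplicative.ofAdd ((0 : ZMod n), (1 : ZMod n)) ∈ Subgroup.zpowers z := by
    have := hz (iso.symm (QuotientGroup.mk (Monoid.Coprod.inr (FreeGroup.of ()))))
    have heq : h (iso.symm (QuotientGroup.mk (Monoid.Coprod.inr (FreeGroup.of ()))))
        = Multiplicative.ofAdd ((0 : ZMod n), (1 : ZMod n)) := by
      simp only [hh, MonoidHom.comp_apply, MulEquiv.coe_toMonoidHom, MulEquiv.apply_symm_apply]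
      show β (Monoid.Coprod.inr (FreeGroup.of ())) = _
      rw [hβ, Monoid.Coprod.lift_apply_inr, hβ₂]
      exact FreeGroup.lift_apply_of
    rwa [heq] at this
  obtain ⟨k, hk⟩ := Subgroup.mem_zpowers_iff.mp hz₁
  obtain ⟨l, hl⟩ := Subgroup.mem_zpowers_iff.mp hz₂
  set a := z.toAdd.1 with ha
  set b := z.toAdd.2 with hb
  have hk' : k • z.toAdd = ((1 : ZMod n), (0 : ZMod n)) := by
    have := congrArg Multiplicative.toAdd hk
    simpa [toAdd_zpow] using this
  have hl' : l • z.toAdd = ((0 : ZMod n), (1 : ZMod n)) := by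
    have := congrArg Multiplicative.toAdd hl
    simpa [toAdd_zpow] using this
  have h1 : (k : ZMod n) * a = 1 := by
    have := congrArg Prod.fst hk'; simpa [ha, zsmul_eq_mul] using this
  have h2 : (k : ZMod n) * b = 0 := by
    have := congrArg Prod.snd hk'; simpa [hb, zsmul_eq_mul] using this
  have h3 : (l : ZMod n) * a = 0 := by
    have := congrArg Prod.fst hl'; simpa [ha, zsmul_eq_mul] using this
  have h4 : (l : ZMod n) * b = 1 := by
    have := congrArg Prod.snd hl'; simpa [hb, zsmul_eq_mul] using this
  have hzero : (1 : ZMod n) = 0 := by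
    calc (1 : ZMod n) = ((k : ZMod n) * a) * ((l : ZMod n) * b) := by rw [h1, h4, one_mul]
    _ = ((k : ZMod n) * b) * ((l : ZMod n) * a) := by ring
    _ = 0 := by rw [h2, zero_mul]
  have : (n : ℕ) ∣ 1 := by
    have := (CharP.cast_eq_zero_iff (ZMod n) n 1)
    simp only [Nat.cast_one] at this
    exact this.mp hzero
  have := Nat.le_of_dvd one_pos this
  omega

namespace LOTAux
open LOT
variable {V E : Type}

def relOf (Γ : LOT V E) (e : E) : FreeGroup V :=
  FreeGroup.of (Γ.ι e) * FreeGroup.of (Γ.lab e) *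
    (FreeGroup.of (Γ.τ e))⁻¹ * (FreeGroup.of (Γ.lab e))⁻¹

def StepOK (Γ : LOT V E) (S : Set V) (s : V × E × Bool) : Prop :=
  s.1 ∉ S ∧ Γ.lab s.2.1 ∈ S ∧
    (if s.2.2 = true then Γ.ι s.2.1 ∈ S ∧ Γ.τ s.2.1 = s.1
     else Γ.τ s.2.1 ∈ S ∧ Γ.ι s.2.1 = s.1)

def Good (Γ : LOT V E) : Set V → List (V × E × Bool) → Prop
  | S, [] => ∀ v, v ∈ S
  | S, s :: L => StepOK Γ S s ∧ Good Γ (insert s.1 S) L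

variable {B : Type} [DecidableEq V]

def updVal (Γ : LOT V E) (p : V → FreeGroup B) (s : V × E × Bool) : FreeGroup B :=
  if s.2.2 = true then (p (Γ.lab s.2.1))⁻¹ * p (Γ.ι s.2.1) * p (Γ.lab s.2.1)
  else p (Γ.lab s.2.1) * p (Γ.τ s.2.1) * (p (Γ.lab s.2.1))⁻¹

def buildP (Γ : LOT V E) : List (V × E × Bool) → (V → FreeGroup B) → (V → FreeGroup B)
  | [], p => p
  | s :: L, p => buildP Γ L (Function.update p s.1 (updVal Γ p s))

lemma buildP_notmem (Γ : LOT V E) :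
    ∀ (L : List (V × E × Bool)) (p : V → FreeGroup B) (v : V),
      (∀ s ∈ L, s.1 ≠ v) → buildP Γ L p v = p v := by
  intro L
  induction L with
  | nil => intro p v _; rfl
  | cons a L ih =>
    intro p v hv
    have h1 : a.1 ≠ v := hv a (List.mem_cons_self)
    rw [buildP, ih _ _ (fun s hs => hv s (List.mem_cons_of_mem a hs)),
      Function.update_of_ne (Ne.symm h1)]

lemma good_notin (Γ : LOT V E) :
    ∀ (L : List (V × E × Bool)) (S : Set V), Good Γ S L → ∀ s ∈ L, s.1 ∉ S := by
  intro L
  induction L with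
  | nil => intro S _ s hs; cases hs
  | cons a L ih =>
    intro S hG s hs
    rcases hs with _ | hs
    · exact hG.1.1
    · intro hmem
      exact ih _ hG.2 s (by assumption) (Set.mem_insert_iff.mpr (Or.inr hmem))

lemma good_cover (Γ : LOT V E) :
    ∀ (L : List (V × E × Bool)) (S : Set V), Good Γ S L →
      ∀ v, v ∈ S ∨ ∃ s ∈ L, s.1 = v := by
  intro L
  induction L with
  | nil => intro S hG v; exact Or.inl (hG v)
  | cons a L ih =>
    intro S hG v
    rcases ih _ hG.2 v with hv | ⟨s, hs, rfl⟩
    · rcases Set.mem_insert_iff.mp hv with rfl | hv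
      · exact Or.inr ⟨a, List.mem_cons_self, rfl⟩
      · exact Or.inl hv
    · exact Or.inr ⟨s, List.mem_cons_of_mem a hs, rfl⟩

lemma good_fst_nodup (Γ : LOT V E) :
    ∀ (L : List (V × E × Bool)) (S : Set V), Good Γ S L → (L.map Prod.fst).Nodup := by
  intro L
  induction L with
  | nil => intro S _; simp
  | cons a L ih =>
    intro S hG
    simp only [List.map_cons, List.nodup_cons]
    refine ⟨?_, ih _ hG.2⟩
    intro hmem
    rcases List.mem_map.mp hmem with ⟨s, hs, hsa⟩
    exact good_notin Γ L _ hG.2 s hs (by rw [hsa]; exact Set.mem_insert _ _)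

lemma good_dir (Γ : LOT V E) :
    ∀ (L : List (V × E × Bool)) (S : Set V), Good Γ S L → ∀ s ∈ L,
      (s.2.2 = true → Γ.τ s.2.1 = s.1 ∧ Γ.ι s.2.1 ∈ S ∪ {t | ∃ a ∈ L, a.1 = t}) ∧
      (s.2.2 = false → Γ.ι s.2.1 = s.1 ∧ Γ.τ s.2.1 ∈ S ∪ {t | ∃ a ∈ L, a.1 = t}) ∧
      Γ.lab s.2.1 ∈ S ∪ {t | ∃ a ∈ L, a.1 = t} := by
  intro L
  induction L with
  | nil => intro S _ s hs; cases hs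
  | cons a L ih =>
    intro S hG s hs
    have hsub : (insert a.1 S : Set V) ∪ {t | ∃ b ∈ L, b.1 = t} ⊆
        S ∪ {t | ∃ b ∈ a :: L, b.1 = t} := by
      intro t ht
      rcases ht with ht | ht
      · rcases Set.mem_insert_iff.mp ht with rfl | ht
        · exact Or.inr ⟨a, List.mem_cons_self, rfl⟩
        · exact Or.inl ht
      · rcases ht with ⟨b, hb, rfl⟩
        exact Or.inr ⟨b, List.mem_cons_of_mem a hb, rfl⟩
    rcases hs with _ | hs
    · constructor
      · intro hb
        have := hG.1.2.2
        rw [if_pos hb] at this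
        exact ⟨this.2, Or.inl this.1⟩
      · refine ⟨?_, Or.inl hG.1.2.1⟩
        intro hb
        have := hG.1.2.2
        rw [if_neg (by simp [hb])] at this
        exact ⟨this.2, Or.inl this.1⟩
    · have := ih _ hG.2 s (by assumption)
      exact ⟨fun hb => ⟨(this.1 hb).1, hsub (this.1 hb).2⟩,
        fun hb => ⟨(this.2.1 hb).1, hsub (this.2.1 hb).2⟩, hsub this.2.2⟩

lemma good_edge_nodup (Γ : LOT V E) :
    ∀ (L : List (V × E × Bool)) (S : Set V), Good Γ S L →
      (L.map (fun s => s.2.1)).Nodup := by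
  intro L
  induction L with
  | nil => intro S _; simp
  | cons a L ih =>
    intro S hG
    simp only [List.map_cons, List.nodup_cons]
    refine ⟨?_, ih _ hG.2⟩
    intro hmem
    rcases List.mem_map.mp hmem with ⟨s, hs, hsa⟩
    -- both endpoints of a.2.1 are in insert a.1 S
    have hends : Γ.ι a.2.1 ∈ insert a.1 S ∧ Γ.τ a.2.1 ∈ insert a.1 S := by
      have := hG.1.2.2
      cases hb : a.2.2 with
      | true =>
        rw [if_pos hb] at this
        exact ⟨Set.mem_insert_iff.mpr (Or.inr this.1), by rw [this.2]; exact Set.mem_insert _ _⟩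
      | false =>
        rw [if_neg (by simp [hb])] at this
        exact ⟨by rw [this.2]; exact Set.mem_insert _ _, Set.mem_insert_iff.mpr (Or.inr this.1)⟩
    -- but s.1 is an endpoint of s.2.1 = a.2.1 and s.1 ∉ insert a.1 S
    have hnotin : s.1 ∉ (insert a.1 S : Set V) := good_notin Γ L _ hG.2 s hs
    have hdir := good_dir Γ L _ hG.2 s hs
    cases hb : s.2.2 with
    | true => exact hnotin (by rw [← (hdir.1 hb).1, hsa]; exact hends.2)
    | false => exact hnotin (by rw [← (hdir.2.1 hb).1, hsa]; exact hends.1)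

lemma good_buildP_eq_on (Γ : LOT V E) (L : List (V × E × Bool)) (S : Set V)
    (hG : Good Γ S L) (p : V → FreeGroup B) (v : V) (hv : v ∈ S) :
    buildP Γ L p v = p v :=
  buildP_notmem Γ L p v (fun s hs heq => good_notin Γ L S hG s hs (heq ▸ hv))

lemma good_buildP_step (Γ : LOT V E) :
    ∀ (L : List (V × E × Bool)) (S : Set V), Good Γ S L → ∀ (p : V → FreeGroup B),
      ∀ s ∈ L, buildP Γ L p s.1 = updVal Γ (buildP Γ L p) s := by
  intro L
  induction L with
  | nil => intro S _ p s hs; cases hs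
  | cons a L ih =>
    intro S hG p s hs
    rcases hs with _ | hs
    · -- head
      have hnotin := good_notin Γ L _ hG.2
      rw [buildP]
      set q := Function.update p a.1 (updVal Γ p a) with hq
      have h1 : buildP Γ L q a.1 = q a.1 :=
        good_buildP_eq_on Γ L _ hG.2 _ _ (Set.mem_insert _ _)
      have h2 : q a.1 = updVal Γ p a := by rw [hq]; exact Function.update_self _ _ _
      have hval : ∀ u : V, u ∈ S → buildP Γ L q u = p u := by
        intro u hu
        rw [good_buildP_eq_on Γ L _ hG.2 _ _ (Set.mem_insert_iff.mpr (Or.inr hu)), hq,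
          Function.update_of_ne (fun h => hG.1.1 (by rw [← h]; exact hu))]
      have hlab : Γ.lab a.2.1 ∈ S := hG.1.2.1
      rw [h1, h2]
      cases hb : a.2.2 with
      | true =>
        have hcond := hG.1.2.2
        rw [if_pos hb] at hcond
        have e1 := hval _ hlab
        have e2 := hval _ hcond.1
        simp only [updVal, if_pos hb]
        rw [e1, e2]
      | false =>
        have hcond := hG.1.2.2
        rw [if_neg (by simp [hb])] at hcond
        have e1 := hval _ hlab
        have e2 := hval _ hcond.1
        simp only [updVal, hb, Bool.false_eq_true, if_false]
        rw [e1, e2]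
    · rw [buildP]
      exact ih _ hG.2 _ s (by assumption)

lemma good_buildP_pred {H : Type*} [Group H] (Γ : LOT V E)
    (μ : FreeGroup B →* H) (m : V → H)
    (hcomp : ∀ e, m (Γ.τ e) = (m (Γ.lab e))⁻¹ * m (Γ.ι e) * m (Γ.lab e)) :
    ∀ (L : List (V × E × Bool)) (S : Set V), Good Γ S L →
      ∀ (p : V → FreeGroup B), (∀ v ∈ S, μ (p v) = m v) →
        ∀ v, μ (buildP Γ L p v) = m v := by
  intro L
  induction L with
  | nil => intro S hG p hp v; exact hp v (hG v)
  | cons a L ih =>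
    intro S hG p hp v
    rw [buildP]
    refine ih _ hG.2 _ ?_ v
    intro u hu
    rcases Set.mem_insert_iff.mp hu with rfl | hu
    · rw [Function.update_self]
      cases hb : a.2.2 with
      | true =>
        have hcond := hG.1.2.2
        rw [if_pos hb] at hcond
        rw [updVal, if_pos hb]
        simp only [map_mul, map_inv]
        rw [hp _ hG.1.2.1, hp _ hcond.1, ← hcond.2, hcomp a.2.1]
      | false =>
        have hcond := hG.1.2.2
        rw [if_neg (by simp [hb])] at hcond
        rw [updVal, if_neg (by simp [hb])]
        simp only [map_mul, map_inv]
        rw [hp _ hG.1.2.1, hp _ hcond.1, ← hcond.2]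
        rw [hcomp a.2.1]
        group
    · rw [Function.update_of_ne (fun h => hG.1.1 (by rw [← h]; exact hu))]
      exact hp u hu

lemma exists_step (Γ : LOT V E) (A S : Set V) (hAS : A ⊆ S) :
    ∀ v, Γ.Spanned A v → v ∈ S ∨ ∃ s : V × E × Bool, StepOK Γ S s := by
  intro v hv
  induction hv with
  | base h => exact Or.inl (hAS h)
  | @extendτ e hlab hι ihlab ihι =>
    rcases ihlab with hlab' | hstep
    · rcases ihι with hι' | hstep
      · by_cases hτ : Γ.τ e ∈ S
        · exact Or.inl hτ
        · exact Or.inr ⟨⟨Γ.τ e, e, true⟩, hτ, hlab', by simp [hι']⟩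
      · exact Or.inr hstep
    · exact Or.inr hstep
  | @extendι e hlab hτ ihlab ihτ =>
    rcases ihlab with hlab' | hstep
    · rcases ihτ with hτ' | hstep
      · by_cases hι : Γ.ι e ∈ S
        · exact Or.inl hι
        · exact Or.inr ⟨⟨Γ.ι e, e, false⟩, hι, hlab', by simp [hτ']⟩
      · exact Or.inr hstep
    · exact Or.inr hstep

lemma exists_good [Fintype V] (Γ : LOT V E) (A : Set V) (hspan : Γ.Spans A) :
    ∃ L, Good Γ A L := by
  classical
  suffices h : ∀ (n : ℕ) (S : Set V), A ⊆ S →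
      (Finset.univ.filter (fun v => v ∉ S)).card ≤ n → ∃ L, Good Γ S L by
    exact h (Fintype.card V) A (le_refl _)
      (by simpa using Finset.card_filter_le Finset.univ (fun v => v ∉ A))
  intro n
  induction n with
  | zero =>
    intro S hAS hcard
    refine ⟨[], ?_⟩
    intro v
    by_contra hv
    have : v ∈ Finset.univ.filter (fun v => v ∉ S) := by simp [hv]
    rw [Nat.le_zero, Finset.card_eq_zero] at hcard
    simp [hcard] at this
  | succ n ih =>
    intro S hAS hcard
    by_cases hall : ∀ v, v ∈ S
    · exact ⟨[], hall⟩
    · push_neg at hall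
      obtain ⟨v, hv⟩ := hall
      rcases exists_step Γ A S hAS v (hspan v) with h | ⟨s, hs⟩
      · exact absurd h hv
      · have hcard' : (Finset.univ.filter (fun v => v ∉ (insert s.1 S : Set V))).card ≤ n := by
          have hlt : (Finset.univ.filter (fun v => v ∉ (insert s.1 S : Set V))).card
              < (Finset.univ.filter (fun v => v ∉ S)).card := by
            apply Finset.card_lt_card
            constructor
            · intro u hu
              simp only [Finset.mem_filter, Finset.mem_univ, true_and] at hu ⊢
              exact fun h => hu (Set.mem_insert_iff.mpr (Or.inr h))
            · intro hsub
              have : s.1 ∈ Finset.univ.filter (fun v => v ∉ S) := by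
                simp [hs.1]
              have := hsub this
              simp at this
          omega
        obtain ⟨L, hL⟩ := ih (insert s.1 S) (hAS.trans (Set.subset_insert _ _)) (by convert hcard' using 2; ext u; simp)
        exact ⟨s :: L, hs, hL⟩

end LOTAux



open LOT in
/-- If `Γ` is a LOT spanned by `V(Γ') ∪ {x}`, where `Γ'` is an admissible
subtree of `Γ` (embedded via `jV, jE`, compatibly with `ι, τ, λ`) and
`x ∉ V(Γ')`, then `G(Γ)` is a one-relator product of `G(Γ')` and the infinite
cyclic group `⟨x⟩`, with relator not a proper power. -/
theorem stmt14 {V E V' E' : Type} [Fintype V] [Fintype E] [Fintype V'] [Fintype E']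
    (Γ : LOT V E) (Γ' : LOT V' E')
    (htree : Γ.IsTreeLOT) (htree' : Γ'.IsTreeLOT)
    (jV : V' → V) (jE : E' → E)
    (hjV : Function.Injective jV) (hjE : Function.Injective jE)
    (hι : ∀ e, Γ.ι (jE e) = jV (Γ'.ι e))
    (hτ : ∀ e, Γ.τ (jE e) = jV (Γ'.τ e))
    (hlab : ∀ e, Γ.lab (jE e) = jV (Γ'.lab e))
    (x : V) (hx : x ∉ Set.range jV)
    (hspan : Γ.Spans (Set.range jV ∪ {x})) :
    ∃ w : Monoid.Coprod Γ'.group (FreeGroup Unit),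
      Nonempty (Γ.group ≃*
        (Monoid.Coprod Γ'.group (FreeGroup Unit) ⧸ Subgroup.normalClosure {w})) ∧
      ¬ ∃ (u : Monoid.Coprod Γ'.group (FreeGroup Unit)) (n : ℕ), 2 ≤ n ∧ w = u ^ n := by
  classical
  set A : Set V := Set.range jV ∪ {x} with hA
  obtain ⟨L, hL⟩ := LOTAux.exists_good Γ A hspan
  set jfun : V' ⊕ Unit → V := Sum.elim jV (fun _ => x) with hjfun
  set jhat : FreeGroup (V' ⊕ Unit) →* FreeGroup V := FreeGroup.map jfun with hjhat
  set p0 : V → FreeGroup (V' ⊕ Unit) := fun v =>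
    if h : v ∈ Set.range jV then FreeGroup.of (Sum.inl h.choose)
    else if v = x then FreeGroup.of (Sum.inr ()) else 1 with hp0
  have hp0jV : ∀ v', p0 (jV v') = FreeGroup.of (Sum.inl v') := by
    intro v'
    have h : jV v' ∈ Set.range jV := ⟨v', rfl⟩
    have h2 : h.choose = v' := hjV h.choose_spec
    simp only [hp0, dif_pos h, h2]
  have hp0x : p0 x = FreeGroup.of (Sum.inr ()) := by
    simp only [hp0]
    rw [dif_neg hx]
    simp
  set p : V → FreeGroup (V' ⊕ Unit) := LOTAux.buildP Γ L p0 with hpdef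
  have hAp : ∀ v ∈ A, p v = p0 v := fun v hv => LOTAux.good_buildP_eq_on Γ L A hL p0 v hv
  have hpjV : ∀ v', p (jV v') = FreeGroup.of (Sum.inl v') := fun v' =>
    (hAp _ (Or.inl ⟨v', rfl⟩)).trans (hp0jV v')
  have hpx : p x = FreeGroup.of (Sum.inr ()) := (hAp _ (Or.inr rfl)).trans hp0x
  set π : FreeGroup V →* FreeGroup (V' ⊕ Unit) := FreeGroup.lift p with hπ
  have hπof : ∀ v, π (FreeGroup.of v) = p v := fun v => FreeGroup.lift_apply_of
  have hjhatof : ∀ b, jhat (FreeGroup.of b) = FreeGroup.of (jfun b) := fun b => FreeGroup.map.of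
  have h1 : ∀ b, π (jhat (FreeGroup.of b)) = FreeGroup.of b := by
    rintro (v' | u)
    · rw [hjhatof, hπof]; exact hpjV v'
    · rw [hjhatof, hπof]; cases u; exact hpx
  have hrelmk : ∀ e, PresentedGroup.mk Γ.rels (LOTAux.relOf Γ e) = 1 := fun e =>
    (QuotientGroup.eq_one_iff _).mpr (Subgroup.subset_normalClosure ⟨e, rfl⟩)
  have hcomp : ∀ e, PresentedGroup.mk Γ.rels (FreeGroup.of (Γ.τ e)) =
      (PresentedGroup.mk Γ.rels (FreeGroup.of (Γ.lab e)))⁻¹ *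
        (PresentedGroup.mk Γ.rels (FreeGroup.of (Γ.ι e)) *
        PresentedGroup.mk Γ.rels (FreeGroup.of (Γ.lab e))) := by
    intro e
    have h0 := hrelmk e
    simp only [LOTAux.relOf, map_mul, map_inv] at h0
    rw [mul_inv_eq_one, mul_inv_eq_iff_eq_mul] at h0
    rw [h0]
    group
  have hcomp' : ∀ e, PresentedGroup.mk Γ.rels (FreeGroup.of (Γ.τ e)) =
      (PresentedGroup.mk Γ.rels (FreeGroup.of (Γ.lab e)))⁻¹ *
        PresentedGroup.mk Γ.rels (FreeGroup.of (Γ.ι e)) *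
        PresentedGroup.mk Γ.rels (FreeGroup.of (Γ.lab e)) := by
    intro e; rw [hcomp e]; group
  have hbase : ∀ v ∈ A, ((PresentedGroup.mk Γ.rels).comp jhat) (p0 v)
      = PresentedGroup.mk Γ.rels (FreeGroup.of v) := by
    rintro v (⟨v', rfl⟩ | rfl)
    · rw [hp0jV, MonoidHom.comp_apply, hjhatof]; rfl
    · rw [hp0x, MonoidHom.comp_apply, hjhatof]; rfl
  have hpred := LOTAux.good_buildP_pred Γ ((PresentedGroup.mk Γ.rels).comp jhat)
    (fun v => PresentedGroup.mk Γ.rels (FreeGroup.of v)) hcomp' L A hL p0 hbase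
  have h2 : ∀ v : V, PresentedGroup.mk Γ.rels (jhat (π (FreeGroup.of v))) =
      PresentedGroup.mk Γ.rels (FreeGroup.of v) := by
    intro v
    rw [hπof]
    exact hpred v
  have hπjE : ∀ e', π (LOTAux.relOf Γ (jE e')) = inlF (LOTAux.relOf Γ' e') := by
    intro e'
    simp only [LOTAux.relOf, map_mul, map_inv, hπof, hι, hτ, hlab, hpjV, inlF,
      FreeGroup.map.of]
  have hπstep : ∀ s ∈ L, π (LOTAux.relOf Γ s.2.1) = 1 := by
    intro s hs
    have hstep := LOTAux.good_buildP_step Γ L A hL p0 s hs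
    have hdir := LOTAux.good_dir Γ L A hL s hs
    rw [← hpdef] at hstep
    cases hb : s.2.2 with
    | true =>
      have hτs := (hdir.1 hb).1
      simp only [LOTAux.relOf, map_mul, map_inv, hπof]
      rw [← hτs] at hstep
      rw [hstep]
      simp only [LOTAux.updVal, if_pos hb]
      group
    | false =>
      have hιs := (hdir.2.1 hb).1
      simp only [LOTAux.relOf, map_mul, map_inv, hπof]
      rw [← hιs] at hstep
      rw [hstep]
      simp only [LOTAux.updVal, hb, Bool.false_eq_true, if_false]
      group
  -- counting
  have hfstnodup := LOTAux.good_fst_nodup Γ L A hL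
  have hedgenodup := LOTAux.good_edge_nodup Γ L A hL
  have hnotinA := LOTAux.good_notin Γ L A hL
  have hcover := LOTAux.good_cover Γ L A hL
  have hAfin : (Finset.univ.filter (fun v => v ∈ A)).card = Fintype.card V' + 1 := by
    have himg : Finset.univ.filter (fun v => v ∈ A) = Finset.univ.image jV ∪ {x} := by
      ext v
      constructor
      · intro hv
        have hv' := (Finset.mem_filter.mp hv).2
        rcases hv' with ⟨v', rfl⟩ | hv'
        · exact Finset.mem_union_left _ (Finset.mem_image.mpr ⟨v', Finset.mem_univ _, rfl⟩)
        · exact Finset.mem_union_right _ (Finset.mem_singleton.mpr hv')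
      · intro hv
        refine Finset.mem_filter.mpr ⟨Finset.mem_univ _, ?_⟩
        rcases Finset.mem_union.mp hv with h | h
        · rcases Finset.mem_image.mp h with ⟨v', _, rfl⟩
          exact Or.inl ⟨v', rfl⟩
        · exact Or.inr (Finset.mem_singleton.mp h)
    rw [himg, Finset.card_union_of_disjoint, Finset.card_image_of_injective _ hjV,
      Finset.card_univ, Finset.card_singleton]
    simp only [Finset.disjoint_singleton_right, Finset.mem_image]
    rintro ⟨v', _, hv'⟩
    exact hx ⟨v', hv'⟩
  have hlen : L.length + (Fintype.card V' + 1) = Fintype.card V := by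
    have hpart := Finset.card_filter_add_card_filter_not
      (s := (Finset.univ : Finset V)) (p := fun v => v ∈ A)
    have hlist : Finset.univ.filter (fun v => ¬ v ∈ A) = (L.map Prod.fst).toFinset := by
      ext v
      simp only [Finset.mem_filter, Finset.mem_univ, true_and, List.mem_toFinset,
        List.mem_map]
      constructor
      · intro hv
        rcases hcover v with h | ⟨s, hs, rfl⟩
        · exact absurd h hv
        · exact ⟨s, hs, rfl⟩
      · rintro ⟨s, hs, rfl⟩
        exact hnotinA s hs
    rw [hlist, List.toFinset_card_of_nodup hfstnodup, hAfin, Finset.card_univ,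
      List.length_map] at hpart
    omega
  have hstepedge_notjE : ∀ s ∈ L, ∀ e', jE e' ≠ s.2.1 := by
    intro s hs e' heq
    have hdir := LOTAux.good_dir Γ L A hL s hs
    have hs1 : s.1 ∉ A := hnotinA s hs
    cases hb : s.2.2 with
    | true =>
      have h := (hdir.1 hb).1
      apply hs1
      rw [← h, ← heq, hτ]
      exact Or.inl ⟨_, rfl⟩
    | false =>
      have h := (hdir.2.1 hb).1
      apply hs1
      rw [← h, ← heq, hι]
      exact Or.inl ⟨_, rfl⟩
  set TE : Finset E := Finset.univ.image jE ∪ (L.map (fun s => s.2.1)).toFinset with hTE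
  have hTEcard : TE.card = Fintype.card E' + L.length := by
    have hdis : Disjoint (Finset.univ.image jE) (L.map (fun s => s.2.1)).toFinset := by
      rw [Finset.disjoint_left]
      intro e he hemem
      rcases Finset.mem_image.mp he with ⟨e', _, rfl⟩
      rcases List.mem_map.mp (List.mem_toFinset.mp hemem) with ⟨s, hs, hse⟩
      exact hstepedge_notjE s hs e' hse.symm
    rw [hTE, Finset.card_union_of_disjoint hdis, Finset.card_image_of_injective _ hjE,
      Finset.card_univ, List.toFinset_card_of_nodup hedgenodup, List.length_map]
  have hone : TEᶜ.card = 1 := by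
    have hcc := Finset.card_add_card_compl TE
    have h1 := htree.2.1
    have h2 := htree'.2.1
    omega
  obtain ⟨estar, hestar⟩ := Finset.card_eq_one.mp hone
  have htri : ∀ e : E, (∃ e', jE e' = e) ∨ (∃ s ∈ L, s.2.1 = e) ∨ e = estar := by
    intro e
    by_cases he : e ∈ TE
    · rcases Finset.mem_union.mp he with h | h
      · rcases Finset.mem_image.mp h with ⟨e', _, rfl⟩; exact Or.inl ⟨e', rfl⟩
      · rcases List.mem_map.mp (List.mem_toFinset.mp h) with ⟨s, hs, rfl⟩
        exact Or.inr (Or.inl ⟨s, hs, rfl⟩)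
    · have hmem : e ∈ TEᶜ := Finset.mem_compl.mpr he
      rw [hestar] at hmem
      exact Or.inr (Or.inr (Finset.mem_singleton.mp hmem))
  set w0 := π (LOTAux.relOf Γ estar) with hw0
  have hnc : Subgroup.normalClosure (π '' Γ.rels)
      = Subgroup.normalClosure ((inlF '' Γ'.rels) ∪ {w0}) := by
    apply le_antisymm
    · apply Subgroup.normalClosure_le_normal
      rintro _ ⟨r, hr, rfl⟩
      obtain ⟨e, rfl⟩ : ∃ e, r = LOTAux.relOf Γ e := hr
      rcases htri e with ⟨e', rfl⟩ | ⟨s, hs, rfl⟩ | rfl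
      · rw [hπjE e']
        exact Subgroup.subset_normalClosure (Or.inl ⟨LOTAux.relOf Γ' e', ⟨e', rfl⟩, rfl⟩)
      · rw [hπstep s hs]
        exact (Subgroup.normalClosure _).one_mem
      · exact Subgroup.subset_normalClosure (Or.inr rfl)
    · apply Subgroup.normalClosure_le_normal
      rintro r (⟨r', hr', rfl⟩ | hr)
      · obtain ⟨e', rfl⟩ : ∃ e'', r' = LOTAux.relOf Γ' e'' := hr'
        rw [← hπjE e']
        exact Subgroup.subset_normalClosure ⟨LOTAux.relOf Γ (jE e'), ⟨jE e', rfl⟩, rfl⟩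
      · rcases hr with rfl
        exact Subgroup.subset_normalClosure ⟨LOTAux.relOf Γ estar, ⟨estar, rfl⟩, rfl⟩
  have iso1 := presentedEquivOfRetract Γ.rels π jhat h1 h2
  have iso2 := presentedEquivOfEq hnc
  have iso3 := presentedUnionEquiv Γ'.rels w0
  refine ⟨θmap Γ'.rels w0, ⟨(iso1.trans iso2).trans iso3⟩, ?_⟩
  rintro ⟨u, n, hn, hw⟩
  haveI : Nonempty V' := Fintype.card_pos_iff.mp (by have := htree'.2.1; omega)
  refine not_proper_power Γ'.rels ?_ Γ.group ?_ _ u n hn hw ((iso1.trans iso2).trans iso3)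
  · rintro r ⟨e, rfl⟩ M _ z
    simp only [map_mul, map_inv, FreeGroup.lift_apply_of]
    group
  · intro M _ f
    refine ⟨f (PresentedGroup.of x), ?_⟩
    have hedge : ∀ e, f (PresentedGroup.of (Γ.ι e)) = f (PresentedGroup.of (Γ.τ e)) := by
      intro e
      have h0 := congrArg f (hrelmk e)
      rw [map_one] at h0
      simp only [LOTAux.relOf, map_mul, map_inv] at h0
      rw [mul_inv_eq_one, mul_inv_eq_iff_eq_mul] at h0
      rw [mul_comm] at h0
      exact mul_left_cancel h0
    have hconn : ∀ a b : V, f (PresentedGroup.of a) = f (PresentedGroup.of b) := by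
      intro a b
      obtain ⟨wlk⟩ := htree.1.1.preconnected a b
      induction wlk with
      | nil => rfl
      | @cons u v w hadj wtail ih =>
        refine Eq.trans ?_ ih
        simp only [LOT.graph, SimpleGraph.fromRel_adj] at hadj
        obtain ⟨-, h | h⟩ := hadj
        · obtain ⟨e, he1, he2⟩ := h; rw [← he1, ← he2]; exact hedge e
        · obtain ⟨e, he1, he2⟩ := h; rw [← he1, ← he2]; exact (hedge e).symm
    intro g
    have hrange : f.range ≤ Subgroup.zpowers (f (PresentedGroup.of x)) := by
      rw [MonoidHom.range_eq_map, ← PresentedGroup.closure_range_of Γ.rels,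
        MonoidHom.map_closure]
      refine (Subgroup.closure_le _).mpr ?_
      rintro _ ⟨_, ⟨v, rfl⟩, rfl⟩
      rw [hconn v x]
      exact Subgroup.mem_zpowers _
    exact hrange ⟨g, rfl⟩
end
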